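/- arXiv:1711.01294 — 8 statements merged into one kernel-verified Lean document; each statement's English description precedes it below -/
import Mathlib

section
/- For every integer k ≥ 2, the matrix R_k is invertible over ℚ and its inverse is given entrywise by (R_k^{-1})_{ij} = min{i,j} − ij/(k−1) for all 1 ≤ i, j ≤ k. -/
/-!
Read 1-based, the `j`-th column of the candidate inverse is `x ↦ min x j - x j / (k - 1)`, the
discrete Green's function of the path `0, 1, …, k` with the endpoint `0` pinned: its second
difference is the indicator of `x = j`, because the linear part has none and `min x j` has a
single kink at `j`. The value at `x = 0` vanishes, which accounts for the missing neighbour of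
the first row, and the last row `(…, -1, 0)` reads off `-(min (k-1) j - j) = [j = k]`, which is
what the coefficient `1 / (k - 1)` is chosen for.
-/

open Finset

section

variable (K : Type*) [Field K]

def secondDiffMatrix (k : ℕ) : Matrix (Fin k) (Fin k) K :=
  Matrix.of fun i j =>
    if (i : ℕ) = (j : ℕ) then (if (i : ℕ) + 1 = k then 0 else 2)
    else if (i : ℕ) + 1 = (j : ℕ) ∨ (j : ℕ) + 1 = (i : ℕ) then -1
    else 0

variable {K}

def green (N : K) (a b : ℕ) : K := (min a b : ℕ) - a * b / N

variable (K) in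
def greenMatrix (k : ℕ) : Matrix (Fin k) (Fin k) K :=
  Matrix.of fun i j => green ((k : K) - 1) (i + 1) (j + 1)

@[simp]
lemma green_zero_left (N : K) (b : ℕ) : green N 0 b = 0 := by
  simp [green]

lemma green_second_diff (N : K) (a b : ℕ) :
    2 * green N (a + 1) b - green N a b - green N (a + 2) b = if a + 1 = b then 1 else 0 := by
  have hmin : 2 * min (a + 1) b = min a b + min (a + 2) b + if a + 1 = b then 1 else 0 := by
    split_ifs <;> omega
  have hminK := congrArg (Nat.cast : ℕ → K) hmin
  push_cast at hminK
  unfold green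
  push_cast
  linear_combination hminK

lemma neg_green_self_left {a b : ℕ} (ha : (a : K) ≠ 0) (hb : b ≤ a + 1) :
    -green (a : K) a b = if b = a + 1 then 1 else 0 := by
  have hmin : b = min a b + if b = a + 1 then 1 else 0 := by
    split_ifs <;> omega
  have hminK := congrArg (Nat.cast : ℕ → K) hmin
  push_cast at hminK
  rw [green, mul_div_cancel_left₀ _ ha]
  linear_combination hminK

lemma sum_secondDiffMatrix_mul {k : ℕ} (i : Fin k) (v : ℕ → K) (hv : v 0 = 0) :
    ∑ l : Fin k, secondDiffMatrix K k i l * v (l + 1) =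
      if (i : ℕ) + 1 = k then -v i else 2 * v (i + 1) - v i - v (i + 2) := by
  set d : K := if (i : ℕ) + 1 = k then 0 else 2
  have hterm : ∀ l : ℕ,
      (if (i : ℕ) = l then d else if (i : ℕ) + 1 = l ∨ l + 1 = (i : ℕ) then -1 else 0) *
          v (l + 1) =
        (if l = i then d * v (l + 1) else 0) - (if l + 1 = i then v (l + 1) else 0) -
          (if l = i + 1 then v (l + 1) else 0) := by
    intro l
    split_ifs <;> first | ring1 | (exfalso; omega)
  -- the sub-diagonal sum is shifted onto `range (k + 1)`, where the ghost term `v 0` vanishes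
  have hsub : ∑ l ∈ range k, (if l + 1 = i then v (l + 1) else 0) = v i := by
    have hshift := sum_range_succ' (fun m => if m = (i : ℕ) then v m else 0) k
    rw [sum_ite_eq', if_pos (mem_range.2 (by omega))] at hshift
    simp only [hv, ite_self, add_zero] at hshift
    exact hshift.symm
  simp only [secondDiffMatrix, Matrix.of_apply]
  rw [Fin.sum_univ_eq_sum_range (fun l => (if (i : ℕ) = l then d
      else if (i : ℕ) + 1 = l ∨ l + 1 = (i : ℕ) then -1 else 0) * v (l + 1))]
  rw [sum_congr rfl fun l _ => hterm l, sum_sub_distrib, sum_sub_distrib, hsub, sum_ite_eq',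
    sum_ite_eq', if_pos (mem_range.2 i.isLt)]
  by_cases hlast : (i : ℕ) + 1 = k
  · simp [d, hlast]
  · simp only [d, hlast, if_false, mem_range, show (i : ℕ) + 1 < k by omega, if_true]

theorem secondDiffMatrix_mul_greenMatrix {k : ℕ} (hk : (k : K) - 1 ≠ 0) :
    secondDiffMatrix K k * greenMatrix K k = 1 := by
  ext i j
  rw [Matrix.mul_apply, Matrix.one_apply]
  simp only [greenMatrix, Matrix.of_apply]
  rw [sum_secondDiffMatrix_mul i (fun a => green ((k : K) - 1) a (j + 1)) (green_zero_left _ _)]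
  by_cases hlast : (i : ℕ) + 1 = k
  · have hN : (k : K) - 1 = (i : ℕ) := by
      have hlastK := congrArg (Nat.cast : ℕ → K) hlast
      push_cast at hlastK
      linear_combination -hlastK
    rw [if_pos hlast, hN, neg_green_self_left (hN ▸ hk) (by omega)]
    simp only [Fin.ext_iff]
    exact if_congr (by omega) rfl rfl
  · rw [if_neg hlast, green_second_diff]
    simp only [Fin.ext_iff, add_left_inj]

end

/-- For an integer `k ≥ 2`, let `R` be the `k × k` matrix over `ℚ` (1-based indexing) with
`R_{ii} = 2` for `1 ≤ i ≤ k-1`, `R_{kk} = 0`, `R_{ij} = -1` when `|i - j| = 1`, and `0`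
elsewhere.  Then `R` is invertible, with `(R⁻¹)_{ij} = min {i, j} - i * j / (k - 1)`.
Here `i j : Fin k` represent the 1-based indices `i+1, j+1`. -/
theorem stmt_5 (k : ℕ) (hk : 2 ≤ k) (R M : Matrix (Fin k) (Fin k) ℚ)
    (hR : ∀ i j : Fin k, R i j =
      if (i : ℕ) = (j : ℕ) then (if (i : ℕ) + 1 = k then 0 else 2)
      else if (i : ℕ) + 1 = (j : ℕ) ∨ (j : ℕ) + 1 = (i : ℕ) then -1
      else 0)
    (hM : ∀ i j : Fin k, M i j =
      ((min ((i : ℕ) + 1) ((j : ℕ) + 1) : ℕ) : ℚ) -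
        (((i : ℕ) : ℚ) + 1) * (((j : ℕ) : ℚ) + 1) / ((k : ℚ) - 1)) :
    R * M = 1 ∧ M * R = 1 := by
  have hRM : R * M = 1 := by
    have hR' : R = secondDiffMatrix ℚ k := Matrix.ext hR
    have hM' : M = greenMatrix ℚ k := by
      ext i j
      simp [hM, greenMatrix, green]
    have hk' : (k : ℚ) - 1 ≠ 0 := by
      have : (2 : ℚ) ≤ k := by exact_mod_cast hk
      linarith
    rw [hR', hM']
    exact secondDiffMatrix_mul_greenMatrix hk'
  exact ⟨hRM, mul_eq_one_comm.mp hRM⟩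
end

section
/- For all integers m ≥ 2 and n ≥ 1, the distinguished Cartan matrix B_{m,n} of the Lie superalgebra B(m,n) is invertible over ℚ, and its inverse is given entrywise (indices 1 ≤ i, j ≤ m+n) by: (B_{m,n}^{-1})_{ij} = −min{i,j} if 1 ≤ i ≤ n, or if 1 ≤ j ≤ n and n+1 ≤ i < m+n; (B_{m,n}^{-1})_{ij} = min{i,j} − 2n if n < i < m+n and n < j ≤ m+n; (B_{m,n}^{-1})_{m+n,j} = −j/2 if 1 ≤ j ≤ n; and (B_{m,n}^{-1})_{m+n,j} = j/2 − n if n < j ≤ m+n. -/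
open Finset

def bEnt (m n : ℕ) (i k : ℕ) : ℚ :=
  if i = k then (if i + 1 < n then -2 else if i + 1 = n then 0 else 2)
  else if i + 1 = k then (if i + 1 < n then 1 else if k + 1 = m + n then -2 else -1)
  else if k + 1 = i then (if k + 1 < n then 1 else -1)
  else 0

def gEnt (m n : ℕ) (k j : ℕ) : ℚ :=
  if k + 1 = m + n then
    (if j + 1 ≤ n then -(((j : ℚ) + 1) / 2) else ((j : ℚ) + 1) / 2 - (n : ℚ))
  else if k + 1 ≤ n ∨ j + 1 ≤ n then -((min (k + 1) (j + 1) : ℕ) : ℚ)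
  else ((min (k + 1) (j + 1) : ℕ) : ℚ) - 2 * (n : ℚ)

lemma bEnt_eq_zero (m n i k : ℕ) (h1 : i ≠ k) (h2 : i + 1 ≠ k) (h3 : k + 1 ≠ i) :
    bEnt m n i k = 0 := by
  simp only [bEnt, if_neg h1, if_neg h2, if_neg h3]

lemma gEnt_hi (m n k j : ℕ) (h1 : k + 1 ≠ m + n) (h2 : n ≤ k + 1) (h3 : n < j + 1) :
    gEnt m n k j = ((min (k + 1) (j + 1) : ℕ) : ℚ) - 2 * n := by
  unfold gEnt
  rw [if_neg h1]
  rcases eq_or_lt_of_le h2 with h | h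
  · rw [if_pos (Or.inl h.ge), show min (k + 1) (j + 1) = n from by omega]
    ring
  · rw [if_neg (by omega)]

lemma gEnt_lo (m n k j : ℕ) (h1 : k + 1 ≠ m + n) (h2 : j + 1 ≤ n) (h3 : j ≤ k) :
    gEnt m n k j = -((j : ℚ) + 1) := by
  unfold gEnt
  rw [if_neg h1, if_pos (Or.inr h2), show min (k + 1) (j + 1) = j + 1 from by omega]
  push_cast; ring

lemma gEnt_le (m n k j : ℕ) (h1 : k + 1 ≠ m + n) (h2 : k + 1 ≤ n) :
    gEnt m n k j = -((min (k + 1) (j + 1) : ℕ) : ℚ) := by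
  unfold gEnt
  rw [if_neg h1, if_pos (Or.inl h2)]

lemma key (m n : ℕ) (hm : 2 ≤ m) (hn : 1 ≤ n) (i j : ℕ) (hi : i < m + n) (hj : j < m + n) :
    ∑ k ∈ Finset.range (m + n), bEnt m n i k * gEnt m n k j = if i = j then 1 else 0 := by
  have h3 : 3 ≤ m + n := by omega
  have hfilter : ∑ k ∈ (Finset.range (m + n)).filter (fun k => i ≤ k + 1 ∧ k ≤ i + 1),
      bEnt m n i k * gEnt m n k j = ∑ k ∈ Finset.range (m + n), bEnt m n i k * gEnt m n k j := by
    apply Finset.sum_filter_of_ne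
    intro k hk hne
    by_contra hp
    exact hne (by rw [bEnt_eq_zero m n i k (by omega) (by omega) (by omega)]; ring)
  rw [← hfilter]
  rcases Nat.eq_zero_or_pos i with rfl | hipos
  · -- i = 0
    have hset : (Finset.range (m + n)).filter (fun k => 0 ≤ k + 1 ∧ k ≤ 0 + 1)
        = {0, 1} := by
      ext k; simp only [Finset.mem_filter, Finset.mem_range, Finset.mem_insert,
        Finset.mem_singleton]; omega
    rw [hset, Finset.sum_insert (by simp), Finset.sum_singleton]
    have hb00 : bEnt m n 0 0 = if 1 < n then -2 else if 1 = n then 0 else 2 := by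
      unfold bEnt; rw [if_pos rfl]
    have hb01 : bEnt m n 0 1 = if 1 < n then 1 else -1 := by
      unfold bEnt; rw [if_neg (by omega), if_pos rfl]
      rcases lt_or_ge 1 n with h | h
      · rw [if_pos h, if_pos h]
      · rw [if_neg (by omega), if_neg (by omega), if_neg (by omega)]
    have hg0 : gEnt m n 0 j = -1 := by
      rw [gEnt_le m n 0 j (by omega) (by omega), show min (0 + 1) (j + 1) = 1 from by omega]
      norm_num
    rcases Nat.lt_or_ge 1 n with hn2 | hn1
    · -- n ≥ 2
      rw [hb00, if_pos hn2, hb01, if_pos hn2, hg0,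
        gEnt_le m n 1 j (by omega) (by omega)]
      rcases Nat.eq_zero_or_pos j with rfl | hj1
      · rw [show min (1 + 1) (0 + 1) = 1 from by omega, if_pos rfl]; norm_num
      · rw [show min (1 + 1) (j + 1) = 2 from by omega, if_neg (by omega)]; norm_num
    · -- n = 1
      have hn1' : n = 1 := by omega
      rw [hb00, if_neg (by omega), if_pos (by omega), hb01, if_neg (by omega)]
      rcases Nat.eq_zero_or_pos j with rfl | hj1
      · rw [gEnt_lo m n 1 0 (by omega) (by omega) (by omega), if_pos rfl]
        norm_num
      · rw [gEnt_hi m n 1 j (by omega) (by omega) (by omega),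
          show min (1 + 1) (j + 1) = 2 from by omega, if_neg (by omega)]
        push_cast [hn1']; ring
  · -- i ≥ 1
    obtain ⟨a, rfl⟩ : ∃ a, i = a + 1 := ⟨i - 1, by omega⟩
    rcases Nat.lt_or_ge (a + 2) (m + n) with hmid | hend
    · -- i + 1 < m + n : three terms
      have hset : (Finset.range (m + n)).filter (fun k => a + 1 ≤ k + 1 ∧ k ≤ a + 1 + 1)
          = {a, a + 1, a + 2} := by
        ext k; simp only [Finset.mem_filter, Finset.mem_range, Finset.mem_insert,
          Finset.mem_singleton]; omega
      rw [hset, Finset.sum_insert (by simp), Finset.sum_insert (by simp),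
        Finset.sum_singleton]
      rcases Nat.lt_or_ge (a + 2) n with hr1 | hr1
      · -- R1 : i + 1 < n
        have hba : bEnt m n (a + 1) a = 1 := by
          unfold bEnt; rw [if_neg (by omega), if_neg (by omega), if_pos rfl, if_pos (by omega)]
        have hbd : bEnt m n (a + 1) (a + 1) = -2 := by
          unfold bEnt; rw [if_pos rfl, if_pos (by omega)]
        have hbc : bEnt m n (a + 1) (a + 2) = 1 := by
          unfold bEnt; rw [if_neg (by omega), if_pos rfl, if_pos (by omega)]
        rw [hba, hbd, hbc,
          gEnt_le m n a j (by omega) (by omega),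
          gEnt_le m n (a + 1) j (by omega) (by omega),
          gEnt_le m n (a + 2) j (by omega) (by omega)]
        rcases Nat.lt_or_ge j (a + 1) with hja | hja
        · rw [show min (a + 1) (j + 1) = j + 1 from by omega,
            show min (a + 1 + 1) (j + 1) = j + 1 from by omega,
            show min (a + 2 + 1) (j + 1) = j + 1 from by omega, if_neg (by omega)]
          push_cast; ring
        · rcases Nat.eq_or_lt_of_le hja with hja' | hja'
          · rw [show min (a + 1) (j + 1) = a + 1 from by omega,
              show min (a + 1 + 1) (j + 1) = a + 2 from by omega,
              show min (a + 2 + 1) (j + 1) = a + 2 from by omega, if_pos (by omega)]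
            push_cast; ring
          · rw [show min (a + 1) (j + 1) = a + 1 from by omega,
              show min (a + 1 + 1) (j + 1) = a + 2 from by omega,
              show min (a + 2 + 1) (j + 1) = a + 3 from by omega, if_neg (by omega)]
            push_cast; ring
      · rcases Nat.eq_or_lt_of_le hr1 with hr2 | hr2
        · -- R2 : i + 1 = n
          have hba : bEnt m n (a + 1) a = 1 := by
            unfold bEnt; rw [if_neg (by omega), if_neg (by omega), if_pos rfl, if_pos (by omega)]
          have hbd : bEnt m n (a + 1) (a + 1) = 0 := by
            unfold bEnt; rw [if_pos rfl, if_neg (by omega), if_pos (by omega)]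
          have hbc : bEnt m n (a + 1) (a + 2) = -1 := by
            unfold bEnt
            rw [if_neg (by omega), if_pos rfl, if_neg (by omega), if_neg (by omega)]
          rw [hba, hbd, hbc, gEnt_le m n a j (by omega) (by omega)]
          rcases Nat.lt_or_ge j n with hjn | hjn
          · rcases Nat.eq_or_lt_of_le (show j + 1 ≤ n from by omega) with hjn' | hjn'
            · -- j + 1 = n, i.e. j = i
              rw [gEnt_lo m n (a + 2) j (by omega) (by omega) (by omega),
                show min (a + 1) (j + 1) = a + 1 from by omega, if_pos (by omega)]
              push_cast [show j = a + 1 from by omega]; ring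
            · rw [gEnt_lo m n (a + 2) j (by omega) (by omega) (by omega),
                show min (a + 1) (j + 1) = j + 1 from by omega, if_neg (by omega)]
              push_cast; ring
          · rw [gEnt_hi m n (a + 2) j (by omega) (by omega) (by omega),
              show min (a + 2 + 1) (j + 1) = n + 1 from by omega,
              show min (a + 1) (j + 1) = a + 1 from by omega, if_neg (by omega)]
            push_cast [show n = a + 2 from by omega]; ring
        · -- R3 : n ≤ i
          have hba : bEnt m n (a + 1) a = -1 := by
            unfold bEnt
            rw [if_neg (by omega), if_neg (by omega), if_pos rfl, if_neg (by omega)]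
          have hbd : bEnt m n (a + 1) (a + 1) = 2 := by
            unfold bEnt; rw [if_pos rfl, if_neg (by omega), if_neg (by omega)]
          rw [hba, hbd]
          rcases Nat.lt_or_ge (a + 3) (m + n) with h3a | h3a
          · -- R3a : i + 2 < m + n
            have hbc : bEnt m n (a + 1) (a + 2) = -1 := by
              unfold bEnt
              rw [if_neg (by omega), if_pos rfl, if_neg (by omega), if_neg (by omega)]
            rw [hbc]
            rcases Nat.lt_or_ge j n with hjn | hjn
            · rw [gEnt_lo m n a j (by omega) (by omega) (by omega),
                gEnt_lo m n (a + 1) j (by omega) (by omega) (by omega),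
                gEnt_lo m n (a + 2) j (by omega) (by omega) (by omega), if_neg (by omega)]
              ring
            · rw [gEnt_hi m n a j (by omega) (by omega) (by omega),
                gEnt_hi m n (a + 1) j (by omega) (by omega) (by omega),
                gEnt_hi m n (a + 2) j (by omega) (by omega) (by omega)]
              rcases Nat.lt_or_ge j (a + 1) with hja | hja
              · rw [show min (a + 1) (j + 1) = j + 1 from by omega,
                  show min (a + 1 + 1) (j + 1) = j + 1 from by omega,
                  show min (a + 2 + 1) (j + 1) = j + 1 from by omega, if_neg (by omega)]
                push_cast; ring
              · rcases Nat.eq_or_lt_of_le hja with hja' | hja'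
                · rw [show min (a + 1) (j + 1) = a + 1 from by omega,
                    show min (a + 1 + 1) (j + 1) = a + 2 from by omega,
                    show min (a + 2 + 1) (j + 1) = a + 2 from by omega, if_pos (by omega)]
                  push_cast; ring
                · rw [show min (a + 1) (j + 1) = a + 1 from by omega,
                    show min (a + 1 + 1) (j + 1) = a + 2 from by omega,
                    show min (a + 2 + 1) (j + 1) = a + 3 from by omega, if_neg (by omega)]
                  push_cast; ring
          · -- R3b : i + 2 = m + n, row a+2 is last
            have hbc : bEnt m n (a + 1) (a + 2) = -2 := by
              unfold bEnt
              rw [if_neg (by omega), if_pos rfl, if_neg (by omega), if_pos (by omega)]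
            have hglast : gEnt m n (a + 2) j =
                if j + 1 ≤ n then -(((j : ℚ) + 1) / 2) else ((j : ℚ) + 1) / 2 - (n : ℚ) := by
              unfold gEnt; rw [if_pos (by omega)]
            rw [hbc, hglast]
            rcases Nat.lt_or_ge j n with hjn | hjn
            · rw [gEnt_lo m n a j (by omega) (by omega) (by omega),
                gEnt_lo m n (a + 1) j (by omega) (by omega) (by omega),
                if_pos (by omega), if_neg (by omega)]
              ring
            · rw [gEnt_hi m n a j (by omega) (by omega) (by omega),
                gEnt_hi m n (a + 1) j (by omega) (by omega) (by omega),
                if_neg (by omega)]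
              rcases Nat.lt_or_ge j (a + 1) with hja | hja
              · rw [show min (a + 1) (j + 1) = j + 1 from by omega,
                  show min (a + 1 + 1) (j + 1) = j + 1 from by omega, if_neg (by omega)]
                push_cast; ring
              · rcases Nat.eq_or_lt_of_le hja with hja' | hja'
                · rw [show min (a + 1) (j + 1) = a + 1 from by omega,
                    show min (a + 1 + 1) (j + 1) = a + 2 from by omega, if_pos (by omega)]
                  push_cast [show j = a + 1 from by omega]; ring
                · have hj2 : j = a + 2 := by omega
                  rw [show min (a + 1) (j + 1) = a + 1 from by omega,
                    show min (a + 1 + 1) (j + 1) = a + 2 from by omega, if_neg (by omega)]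
                  push_cast [hj2]; ring
    · -- i + 1 = m + n : last row, two terms
      have hend' : a + 2 = m + n := by omega
      have hset : (Finset.range (m + n)).filter (fun k => a + 1 ≤ k + 1 ∧ k ≤ a + 1 + 1)
          = {a, a + 1} := by
        ext k; simp only [Finset.mem_filter, Finset.mem_range, Finset.mem_insert,
          Finset.mem_singleton]; omega
      rw [hset, Finset.sum_insert (by simp), Finset.sum_singleton]
      have hba : bEnt m n (a + 1) a = -1 := by
        unfold bEnt
        rw [if_neg (by omega), if_neg (by omega), if_pos rfl, if_neg (by omega)]
      have hbd : bEnt m n (a + 1) (a + 1) = 2 := by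
        unfold bEnt; rw [if_pos rfl, if_neg (by omega), if_neg (by omega)]
      have hglast : gEnt m n (a + 1) j =
          if j + 1 ≤ n then -(((j : ℚ) + 1) / 2) else ((j : ℚ) + 1) / 2 - (n : ℚ) := by
        unfold gEnt; rw [if_pos (by omega)]
      rw [hba, hbd, hglast]
      rcases Nat.lt_or_ge j n with hjn | hjn
      · rw [gEnt_lo m n a j (by omega) (by omega) (by omega),
          if_pos (by omega), if_neg (by omega)]
        ring
      · rw [gEnt_hi m n a j (by omega) (by omega) (by omega), if_neg (by omega)]
        rcases Nat.lt_or_ge j (a + 1) with hja | hja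
        · rw [show min (a + 1) (j + 1) = j + 1 from by omega, if_neg (by omega)]
          push_cast; ring
        · have hja' : j = a + 1 := by omega
          rw [show min (a + 1) (j + 1) = a + 1 from by omega, if_pos (by omega)]
          push_cast [hja']; ring


/-- For integers `m ≥ 2` and `n ≥ 1`, the distinguished Cartan matrix `B_{m,n}` of the Lie
superalgebra `B(m,n)` is the `(m+n) × (m+n)` matrix over `ℚ` with (1-based indexing)
`a_{ii} = -2` for `i ≤ n-1`, `a_{nn} = 0`, `a_{ii} = 2` for `i ≥ n+1`; superdiagonal
entries `a_{i,i+1} = 1` for `i ≤ n-1`, `a_{n,n+1} = -1`, `a_{i,i+1} = -1` for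
`n+1 ≤ i ≤ m+n-2`, `a_{m+n-1,m+n} = -2`; subdiagonal entries `a_{i+1,i} = 1` for
`i ≤ n-1`, and `-1` for `n ≤ i ≤ m+n-1`; `0` elsewhere.  It is invertible, with inverse
`M` given (1-based indices) by: `M_{ij} = -min{i,j}` if `i ≤ n`, or if `j ≤ n` and
`n+1 ≤ i < m+n`; `M_{ij} = min{i,j} - 2n` if `n < i < m+n` and `n < j ≤ m+n`;
`M_{m+n,j} = -j/2` if `j ≤ n`; `M_{m+n,j} = j/2 - n` if `n < j ≤ m+n`.
Here `i j : Fin (m+n)` represent the 1-based indices `i+1, j+1`. -/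
theorem stmt_8 (m n : ℕ) (hm : 2 ≤ m) (hn : 1 ≤ n)
    (B M : Matrix (Fin (m + n)) (Fin (m + n)) ℚ)
    (hB : ∀ i j : Fin (m + n), B i j =
      if (i : ℕ) = (j : ℕ) then
        (if (i : ℕ) + 1 < n then -2 else if (i : ℕ) + 1 = n then 0 else 2)
      else if (i : ℕ) + 1 = (j : ℕ) then
        (if (i : ℕ) + 1 < n then 1 else if (j : ℕ) + 1 = m + n then -2 else -1)
      else if (j : ℕ) + 1 = (i : ℕ) then
        (if (j : ℕ) + 1 < n then 1 else -1)
      else 0)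
    (hM : ∀ i j : Fin (m + n), M i j =
      if (i : ℕ) + 1 = m + n then
        (if (j : ℕ) + 1 ≤ n then -((((j : ℕ) : ℚ) + 1) / 2)
         else (((j : ℕ) : ℚ) + 1) / 2 - (n : ℚ))
      else if (i : ℕ) + 1 ≤ n ∨ (j : ℕ) + 1 ≤ n then
        -((min ((i : ℕ) + 1) ((j : ℕ) + 1) : ℕ) : ℚ)
      else ((min ((i : ℕ) + 1) ((j : ℕ) + 1) : ℕ) : ℚ) - 2 * (n : ℚ)) :
    B * M = 1 ∧ M * B = 1 := by
  have hBM : B * M = 1 := by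
    ext i j
    rw [Matrix.mul_apply]
    have hterm : ∀ k : Fin (m + n),
        B i k * M k j = bEnt m n (↑i) (↑k) * gEnt m n (↑k) (↑j) := by
      intro k; rw [hB, hM]; rfl
    rw [Finset.sum_congr rfl (fun k _ => hterm k),
      Fin.sum_univ_eq_sum_range (fun k => bEnt m n (↑i) k * gEnt m n k (↑j)) (m + n),
      key m n hm hn (↑i) (↑j) i.isLt j.isLt, Matrix.one_apply]
    simp [Fin.ext_iff]
  exact ⟨hBM, mul_eq_one_comm.mp hBM⟩
end

section
/- For every integer n ≥ 3, the distinguished Cartan matrix C_{1,n−1} of the Lie superalgebra C(n) is invertible over ℚ, and its inverse is given entrywise (indices 1 ≤ i, j ≤ n) by: (C_{1,n−1}^{-1})_{ij} = 2 − min{i,j} if 1 ≤ j < n, and (C_{1,n−1}^{-1})_{in} = 1 − i/2. -/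
/-- For an integer `n ≥ 3`, the distinguished Cartan matrix `C_{1,n-1}` of the Lie
superalgebra `C(n)` is the `n × n` matrix over `ℚ` with (1-based indexing) `a_{11} = 0`,
`a_{ii} = -2` for `2 ≤ i ≤ n`, superdiagonal entries `1`, subdiagonal entries `1` except
`a_{n,n-1} = 2`, and `0` elsewhere.  It is invertible, with inverse `M` given by
`M_{ij} = 2 - min{i,j}` if `j < n` and `M_{in} = 1 - i/2`.
Here `i j : Fin n` represent the 1-based indices `i+1, j+1`. -/
theorem stmt_9 (n : ℕ) (hn : 3 ≤ n) (C M : Matrix (Fin n) (Fin n) ℚ)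
    (hC : ∀ i j : Fin n, C i j =
      if (i : ℕ) = (j : ℕ) then (if (i : ℕ) = 0 then 0 else -2)
      else if (i : ℕ) + 1 = (j : ℕ) then 1
      else if (j : ℕ) + 1 = (i : ℕ) then (if (i : ℕ) + 1 = n then 2 else 1)
      else 0)
    (hM : ∀ i j : Fin n, M i j =
      if (j : ℕ) + 1 < n then 2 - ((min ((i : ℕ) + 1) ((j : ℕ) + 1) : ℕ) : ℚ)
      else 1 - (((i : ℕ) : ℚ) + 1) / 2) :
    C * M = 1 ∧ M * C = 1 := by
  have key : M * C = 1 := by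
    ext i j
    rw [Matrix.mul_apply, Matrix.one_apply]
    have hsum : ∀ k : Fin n, M i k * C k j =
        (if k = j then M i k * (if (j:ℕ) = 0 then 0 else -2) else 0)
      + (if (k:ℕ) + 1 = (j:ℕ) then M i k else 0)
      + (if (k:ℕ) = (j:ℕ) + 1 then M i k * (if (k:ℕ)+1 = n then 2 else 1) else 0) := by
      intro k
      rw [hC]
      rcases eq_or_ne k j with h | h
      · subst h
        rw [if_pos rfl, if_pos rfl, if_neg (by omega : ¬ (k:ℕ)+1 = (k:ℕ)),
          if_neg (by omega : ¬ (k:ℕ) = (k:ℕ)+1)]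
        ring
      · have h' : (k:ℕ) ≠ (j:ℕ) := fun hh => h (Fin.ext hh)
        rw [if_neg h', if_neg h]
        rcases eq_or_ne ((k:ℕ)+1) (j:ℕ) with h2 | h2
        · rw [if_pos h2, if_pos h2, if_neg (by omega : ¬ (k:ℕ) = (j:ℕ)+1)]
          ring
        · rw [if_neg h2, if_neg h2]
          rcases eq_or_ne ((j:ℕ)+1) (k:ℕ) with h3 | h3
          · rw [if_pos h3, if_pos h3.symm]; ring
          · rw [if_neg h3, if_neg (fun hh => h3 hh.symm)]; ring
    rw [Finset.sum_congr rfl (fun k _ => hsum k), Finset.sum_add_distrib,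
      Finset.sum_add_distrib]
    have e1 : ∑ k : Fin n, (if k = j then M i k * (if (j:ℕ) = 0 then 0 else -2) else 0)
        = M i j * (if (j:ℕ) = 0 then 0 else -2) := by
      rw [Finset.sum_eq_single j]
      · rw [if_pos rfl]
      · intro b _ hb; rw [if_neg hb]
      · intro h; exact absurd (Finset.mem_univ j) h
    rw [e1]
    rcases eq_or_ne ((j:ℕ)) 0 with hJ0 | hJ0
    · -- j = 0 : only the k = 1 term survives
      have e2 : ∑ k : Fin n, (if (k:ℕ) + 1 = (j:ℕ) then M i k else 0) = 0 :=
        Finset.sum_eq_zero (fun k _ => if_neg (by omega))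
      have h1n : (1:ℕ) < n := by omega
      have e3 : ∑ k : Fin n, (if (k:ℕ) = (j:ℕ) + 1 then M i k * (if (k:ℕ)+1 = n then 2 else 1) else 0)
          = M i ⟨1, h1n⟩ * (if 1+1 = n then 2 else 1) := by
        rw [Finset.sum_eq_single ⟨1, h1n⟩]
        · rw [if_pos (by simp [hJ0])]
        · intro b _ hb; rw [if_neg (fun hh => hb (Fin.ext (by simp [hh, hJ0])))]
        · intro h; exact absurd (Finset.mem_univ _) h
      rw [e2, e3, if_pos hJ0, if_neg (by omega : ¬ 1+1 = n), hM, hM]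
      rw [if_pos (show (1:ℕ)+1 < n by omega)]
      simp only [Fin.ext_iff, hJ0]
      rcases eq_or_ne ((i:ℕ)) 0 with hi | hi
      · rw [if_pos hi, (by omega : min ((i:ℕ)+1) (1+1) = 1)]
        push_cast; ring
      · rw [if_neg hi, (by omega : min ((i:ℕ)+1) (1+1) = 2)]
        push_cast; ring
    · -- j ≥ 1
      have hJm : (j:ℕ) - 1 < n := by omega
      have e2 : ∑ k : Fin n, (if (k:ℕ) + 1 = (j:ℕ) then M i k else 0) = M i ⟨(j:ℕ)-1, hJm⟩ := by
        rw [Finset.sum_eq_single ⟨(j:ℕ)-1, hJm⟩]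
        · rw [if_pos (by simp; omega)]
        · intro b _ hb; rw [if_neg (fun hh => hb (Fin.ext (by simp; omega)))]
        · intro h; exact absurd (Finset.mem_univ _) h
      rw [e2, if_neg hJ0]
      rcases eq_or_ne ((j:ℕ)+1) n with hJn | hJn
      · -- j is the last column
        have e3 : ∑ k : Fin n, (if (k:ℕ) = (j:ℕ) + 1 then M i k * (if (k:ℕ)+1 = n then 2 else 1) else 0)
            = 0 := Finset.sum_eq_zero (fun k _ => if_neg (by omega))
        rw [e3, hM, hM]
        rw [if_neg (by omega), if_pos (show (j:ℕ)-1+1 < n by omega)]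
        simp only [Fin.ext_iff]
        rw [(by omega : (j:ℕ) - 1 + 1 = (j:ℕ))]
        rcases eq_or_ne ((i:ℕ)) ((j:ℕ)) with hij | hij
        · rw [if_pos hij, (by omega : min ((i:ℕ)+1) ((j:ℕ)) = (j:ℕ)), hij]
          ring
        · rw [if_neg hij,
            (by omega : min ((i:ℕ)+1) ((j:ℕ)) = (i:ℕ)+1)]
          push_cast; ring
      · -- generic column: three terms
        have hJp : (j:ℕ)+1 < n := by omega
        have e3 : ∑ k : Fin n, (if (k:ℕ) = (j:ℕ) + 1 then M i k * (if (k:ℕ)+1 = n then 2 else 1) else 0)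
            = M i ⟨(j:ℕ)+1, hJp⟩ * (if (j:ℕ)+1+1 = n then 2 else 1) := by
          rw [Finset.sum_eq_single ⟨(j:ℕ)+1, hJp⟩]
          · rw [if_pos (by simp)]
          · intro b _ hb; rw [if_neg (fun hh => hb (Fin.ext (by simp [hh])))]
          · intro h; exact absurd (Finset.mem_univ _) h
        rw [e3, hM, hM, hM]
        rw [if_pos hJp, if_pos (show (j:ℕ)-1+1 < n by omega)]
        simp only [Fin.ext_iff]
        rw [(by omega : (j:ℕ) - 1 + 1 = (j:ℕ))]
        rcases eq_or_ne ((j:ℕ)+1+1) n with hJ2 | hJ2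
        · -- k = j+1 is the last column
          rw [if_pos hJ2, if_neg (by omega : ¬ (j:ℕ)+1+1 < n)]
          rcases lt_trichotomy ((i:ℕ)) ((j:ℕ)) with hij | hij | hij
          · rw [if_neg (by omega),
              (by omega : min ((i:ℕ)+1) ((j:ℕ)) = (i:ℕ)+1),
              (by omega : min ((i:ℕ)+1) ((j:ℕ)+1) = (i:ℕ)+1)]
            push_cast; ring
          · rw [if_pos hij,
              (by omega : min ((i:ℕ)+1) ((j:ℕ)) = (j:ℕ)),
              (by omega : min ((i:ℕ)+1) ((j:ℕ)+1) = (j:ℕ)+1), hij]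
            push_cast; ring
          · have hin : (i:ℕ) = (j:ℕ) + 1 := by omega
            rw [if_neg (by omega),
              (by omega : min ((i:ℕ)+1) ((j:ℕ)) = (j:ℕ)),
              (by omega : min ((i:ℕ)+1) ((j:ℕ)+1) = (j:ℕ)+1), hin]
            push_cast; ring
        · rw [if_neg hJ2, if_pos (by omega : (j:ℕ)+1+1 < n)]
          rcases lt_trichotomy ((i:ℕ)) ((j:ℕ)) with hij | hij | hij
          · rw [if_neg (by omega),
              (by omega : min ((i:ℕ)+1) ((j:ℕ)) = (i:ℕ)+1),
              (by omega : min ((i:ℕ)+1) ((j:ℕ)+1) = (i:ℕ)+1),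
              (by omega : min ((i:ℕ)+1) ((j:ℕ)+1+1) = (i:ℕ)+1)]
            push_cast; ring
          · rw [if_pos hij,
              (by omega : min ((i:ℕ)+1) ((j:ℕ)) = (j:ℕ)),
              (by omega : min ((i:ℕ)+1) ((j:ℕ)+1) = (j:ℕ)+1),
              (by omega : min ((i:ℕ)+1) ((j:ℕ)+1+1) = (j:ℕ)+1)]
            push_cast; ring
          · rw [if_neg (by omega),
              (by omega : min ((i:ℕ)+1) ((j:ℕ)) = (j:ℕ)),
              (by omega : min ((i:ℕ)+1) ((j:ℕ)+1) = (j:ℕ)+1),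
              (by omega : min ((i:ℕ)+1) ((j:ℕ)+1+1) = (j:ℕ)+2)]
            push_cast; ring
  exact ⟨mul_eq_one_comm.mp key, key⟩
end

section
/- Let D be the array over ℚ indexed by the integers i, j ≤ 1 with D_{ii} = 2 for all i, D_{i,i−1} = D_{i−1,i} = −1 for all i ≤ 0, D_{1,−1} = D_{−1,1} = −1, D_{0,1} = D_{1,0} = 0, and all other entries 0, and let M be the symmetric array with (for j ≤ i ≤ 1): M_{00} = M_{11} = 1/4, M_{10} = −1/4, M_{ij} = j/2 if j < 0 and i ∈ {0, 1}, and M_{ij} = j if j ≤ i ≤ −1. Then M is a two-sided inverse of D: for all i, j ≤ 1, the sums Σ_k D_{ik} M_{kj} and Σ_k M_{ik} D_{kj} (each having only finitely many nonzero terms) both equal 1 if i = j and 0 if i ≠ j. -/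
private lemma stmt15_auxA (D M : {i : ℤ // i ≤ 1} → {i : ℤ // i ≤ 1} → ℚ)
    (hD : ∀ i j : {i : ℤ // i ≤ 1}, D i j =
      if (i : ℤ) = (j : ℤ) then 2
      else if ((i : ℤ) = 1 ∧ (j : ℤ) = -1) ∨ ((i : ℤ) = -1 ∧ (j : ℤ) = 1) then -1
      else if ((i : ℤ) = 0 ∧ (j : ℤ) = 1) ∨ ((i : ℤ) = 1 ∧ (j : ℤ) = 0) then 0
      else if (i : ℤ) + 1 = (j : ℤ) ∨ (j : ℤ) + 1 = (i : ℤ) then -1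
      else 0)
    (hMsymm : ∀ i j : {i : ℤ // i ≤ 1}, M j i = M i j)
    (hM : ∀ i j : {i : ℤ // i ≤ 1}, (j : ℤ) ≤ (i : ℤ) → M i j =
      if (i : ℤ) ≤ -1 then ((j : ℤ) : ℚ)
      else if (j : ℤ) < 0 then ((j : ℤ) : ℚ) / 2
      else if (i : ℤ) = (j : ℤ) then 1 / 4
      else -(1 / 4))
    (iv jv : ℤ) (hi : iv ≤ 1) (hj : jv ≤ 1) (hneg : iv ≤ -1) :
    (∑ᶠ k, D ⟨iv, hi⟩ k * M k ⟨jv, hj⟩) = if iv = jv then (1 : ℚ) else 0 := by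
  have hDv : ∀ (a b : ℤ) (ha : a ≤ 1) (hb : b ≤ 1), D ⟨a, ha⟩ ⟨b, hb⟩ =
      if a = b then 2
      else if (a = 1 ∧ b = -1) ∨ (a = -1 ∧ b = 1) then -1
      else if (a = 0 ∧ b = 1) ∨ (a = 1 ∧ b = 0) then 0
      else if a + 1 = b ∨ b + 1 = a then -1
      else 0 := fun a b ha hb => hD ⟨a, ha⟩ ⟨b, hb⟩
  have hM' : ∀ i j : {i : ℤ // i ≤ 1}, M i j =
      if (j : ℤ) ≤ (i : ℤ) then
        (if (i : ℤ) ≤ -1 then ((j : ℤ) : ℚ)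
         else if (j : ℤ) < 0 then ((j : ℤ) : ℚ) / 2
         else if (i : ℤ) = (j : ℤ) then 1 / 4 else -(1 / 4))
      else
        (if (j : ℤ) ≤ -1 then ((i : ℤ) : ℚ)
         else if (i : ℤ) < 0 then ((i : ℤ) : ℚ) / 2
         else if (j : ℤ) = (i : ℤ) then 1 / 4 else -(1 / 4)) := by
    intro i j
    rcases le_or_gt (j : ℤ) (i : ℤ) with h | h
    · rw [if_pos h, hM i j h]
    · rw [if_neg (not_le.mpr h), ← hMsymm, hM j i h.le]
  have hMv : ∀ (a b : ℤ) (ha : a ≤ 1) (hb : b ≤ 1), M ⟨a, ha⟩ ⟨b, hb⟩ =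
      if b ≤ a then
        (if a ≤ -1 then (b : ℚ)
         else if b < 0 then (b : ℚ) / 2
         else if a = b then 1 / 4 else -(1 / 4))
      else
        (if b ≤ -1 then (a : ℚ)
         else if a < 0 then (a : ℚ) / 2
         else if b = a then 1 / 4 else -(1 / 4)) := fun a b ha hb => hM' ⟨a, ha⟩ ⟨b, hb⟩
  have hMlow : ∀ (a b : ℤ) (ha : a ≤ 1) (hb : b ≤ 1), a ≤ -1 → M ⟨a, ha⟩ ⟨b, hb⟩ =
      if b ≤ a then (b : ℚ) else if b ≤ -1 then (a : ℚ) else (a : ℚ) / 2 := by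
    intro a b ha hb hlow
    rw [hMv]
    split_ifs <;> first | rfl | (exfalso; omega)
  have hsupp : ∀ (i j : {i : ℤ // i ≤ 1}) (s : Finset {i : ℤ // i ≤ 1}),
      (∀ k, D i k ≠ 0 → k ∈ s) →
      (∑ᶠ k, D i k * M k j) = ∑ k ∈ s, D i k * M k j := by
    intro i j s hs
    apply finsum_eq_finset_sum_of_support_subset
    intro k hk
    simp only [Function.mem_support] at hk
    exact hs k (fun h => hk (by rw [h, zero_mul]))
  have hDs : ∀ i k : {i : ℤ // i ≤ 1}, D i k ≠ 0 →
      (k : ℤ) = i ∨ (k : ℤ) + 1 = i ∨ (i : ℤ) + 1 = k ∨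
      ((i : ℤ) = 1 ∧ (k : ℤ) = -1) ∨ ((i : ℤ) = -1 ∧ (k : ℤ) = 1) := by
    intro i k h
    rw [hD] at h
    split_ifs at h with h1 h2 h3 h4 <;> first | omega | exact absurd rfl h
  rcases lt_or_ge iv (-1) with hc | hc
  · -- iv ≤ -2
    have e1 : (iv - 1 : ℤ) ≤ 1 := by omega
    have e2 : (iv + 1 : ℤ) ≤ 1 := by omega
    have m1 : (⟨iv - 1, e1⟩ : {i : ℤ // i ≤ 1}) ∉
        ({⟨iv, hi⟩, ⟨iv + 1, e2⟩} : Finset {i : ℤ // i ≤ 1}) := by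
      simp only [Finset.mem_insert, Finset.mem_singleton, Subtype.mk.injEq]
      omega
    have m2 : (⟨iv, hi⟩ : {i : ℤ // i ≤ 1}) ∉
        ({⟨iv + 1, e2⟩} : Finset {i : ℤ // i ≤ 1}) := by
      simp only [Finset.mem_singleton, Subtype.mk.injEq]
      omega
    rw [hsupp ⟨iv, hi⟩ ⟨jv, hj⟩
        ({⟨iv - 1, e1⟩, ⟨iv, hi⟩, ⟨iv + 1, e2⟩} : Finset _)
        (by
          rintro ⟨kv, hk⟩ hne
          have := hDs _ _ hne
          simp only [Finset.mem_insert, Finset.mem_singleton, Subtype.mk.injEq] at this ⊢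
          omega)]
    rw [Finset.sum_insert m1, Finset.sum_insert m2, Finset.sum_singleton]
    have d1 : D ⟨iv, hi⟩ ⟨iv - 1, e1⟩ = -1 := by
      rw [hDv]; split_ifs <;> first | rfl | (exfalso; omega)
    have d2 : D ⟨iv, hi⟩ ⟨iv, hi⟩ = 2 := by
      rw [hDv]; split_ifs <;> first | rfl | (exfalso; omega)
    have d3 : D ⟨iv, hi⟩ ⟨iv + 1, e2⟩ = -1 := by
      rw [hDv]; split_ifs <;> first | rfl | (exfalso; omega)
    rw [d1, d2, d3,
        hMlow (iv - 1) jv e1 hj (by omega),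
        hMlow iv jv hi hj (by omega),
        hMlow (iv + 1) jv e2 hj (by omega)]
    clear * - hi hj hc
    split_ifs <;>
        first
          | (exfalso; omega)
          | (push_cast; ring1)
          | (have h' : jv = iv := (by omega); subst h'; push_cast; ring1)
          | (have h' : jv = iv + 1 := (by omega); subst h'; push_cast; ring1)
          | (have h' : jv = iv - 1 := (by omega); subst h'; push_cast; ring1)
          | (have h' : jv = -2 := (by omega); subst h'; push_cast; ring1)
          | (have h' : jv = -1 := (by omega); subst h'; push_cast; ring1)
          | (have h' : jv = 0 := (by omega); subst h'; push_cast; ring1)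
          | (have h' : jv = 1 := (by omega); subst h'; push_cast; ring1)
          | norm_num
  · -- iv = -1
    have hiv : iv = -1 := by omega
    subst hiv
    have e2 : (-2 : ℤ) ≤ 1 := by norm_num
    have e1 : (-1 : ℤ) ≤ 1 := by norm_num
    have e0 : (0 : ℤ) ≤ 1 := by norm_num
    have e3 : (1 : ℤ) ≤ 1 := le_refl 1
    have m1 : (⟨-2, e2⟩ : {i : ℤ // i ≤ 1}) ∉
        ({⟨-1, e1⟩, ⟨0, e0⟩, ⟨1, e3⟩} : Finset {i : ℤ // i ≤ 1}) := by
      simp only [Finset.mem_insert, Finset.mem_singleton, Subtype.mk.injEq]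
      omega
    have m2 : (⟨-1, e1⟩ : {i : ℤ // i ≤ 1}) ∉
        ({⟨0, e0⟩, ⟨1, e3⟩} : Finset {i : ℤ // i ≤ 1}) := by
      simp only [Finset.mem_insert, Finset.mem_singleton, Subtype.mk.injEq]
      omega
    have m3 : (⟨0, e0⟩ : {i : ℤ // i ≤ 1}) ∉
        ({⟨1, e3⟩} : Finset {i : ℤ // i ≤ 1}) := by
      simp only [Finset.mem_singleton, Subtype.mk.injEq]
      omega
    rw [hsupp ⟨-1, e1⟩ ⟨jv, hj⟩
        ({⟨-2, e2⟩, ⟨-1, e1⟩, ⟨0, e0⟩, ⟨1, e3⟩} : Finset _)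
        (by
          rintro ⟨kv, hk⟩ hne
          have := hDs _ _ hne
          simp only [Finset.mem_insert, Finset.mem_singleton, Subtype.mk.injEq] at this ⊢
          omega)]
    rw [Finset.sum_insert m1, Finset.sum_insert m2, Finset.sum_insert m3,
        Finset.sum_singleton]
    have d1 : D ⟨-1, e1⟩ ⟨-2, e2⟩ = -1 := by
      rw [hDv]; norm_num
    have d2 : D ⟨-1, e1⟩ ⟨-1, e1⟩ = 2 := by
      rw [hDv]; norm_num
    have d3 : D ⟨-1, e1⟩ ⟨0, e0⟩ = -1 := by
      rw [hDv]; norm_num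
    have d4 : D ⟨-1, e1⟩ ⟨1, e3⟩ = -1 := by
      rw [hDv]; norm_num
    rw [d1, d2, d3, d4,
        hMlow (-2) jv e2 hj (by norm_num),
        hMlow (-1) jv e1 hj (by norm_num),
        hMv 0 jv e0 hj, hMv 1 jv e3 hj]
    clear * - hj
    split_ifs <;>
      first
        | (exfalso; omega)
        | (push_cast; ring1)
        | (have h' : jv = iv := (by omega); subst h'; push_cast; ring1)
        | (have h' : jv = iv + 1 := (by omega); subst h'; push_cast; ring1)
        | (have h' : jv = iv - 1 := (by omega); subst h'; push_cast; ring1)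
        | (have h' : jv = -2 := (by omega); subst h'; push_cast; ring1)
        | (have h' : jv = -1 := (by omega); subst h'; push_cast; ring1)
        | (have h' : jv = 0 := (by omega); subst h'; push_cast; ring1)
        | (have h' : jv = 1 := (by omega); subst h'; push_cast; ring1)
        | norm_num

private lemma stmt15_auxB (D M : {i : ℤ // i ≤ 1} → {i : ℤ // i ≤ 1} → ℚ)
    (hD : ∀ i j : {i : ℤ // i ≤ 1}, D i j =
      if (i : ℤ) = (j : ℤ) then 2
      else if ((i : ℤ) = 1 ∧ (j : ℤ) = -1) ∨ ((i : ℤ) = -1 ∧ (j : ℤ) = 1) then -1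
      else if ((i : ℤ) = 0 ∧ (j : ℤ) = 1) ∨ ((i : ℤ) = 1 ∧ (j : ℤ) = 0) then 0
      else if (i : ℤ) + 1 = (j : ℤ) ∨ (j : ℤ) + 1 = (i : ℤ) then -1
      else 0)
    (hMsymm : ∀ i j : {i : ℤ // i ≤ 1}, M j i = M i j)
    (hM : ∀ i j : {i : ℤ // i ≤ 1}, (j : ℤ) ≤ (i : ℤ) → M i j =
      if (i : ℤ) ≤ -1 then ((j : ℤ) : ℚ)
      else if (j : ℤ) < 0 then ((j : ℤ) : ℚ) / 2
      else if (i : ℤ) = (j : ℤ) then 1 / 4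
      else -(1 / 4))
    (iv jv : ℤ) (hi : iv ≤ 1) (hj : jv ≤ 1) (hnn : 0 ≤ iv) :
    (∑ᶠ k, D ⟨iv, hi⟩ k * M k ⟨jv, hj⟩) = if iv = jv then (1 : ℚ) else 0 := by
  have hDv : ∀ (a b : ℤ) (ha : a ≤ 1) (hb : b ≤ 1), D ⟨a, ha⟩ ⟨b, hb⟩ =
      if a = b then 2
      else if (a = 1 ∧ b = -1) ∨ (a = -1 ∧ b = 1) then -1
      else if (a = 0 ∧ b = 1) ∨ (a = 1 ∧ b = 0) then 0
      else if a + 1 = b ∨ b + 1 = a then -1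
      else 0 := fun a b ha hb => hD ⟨a, ha⟩ ⟨b, hb⟩
  have hM' : ∀ i j : {i : ℤ // i ≤ 1}, M i j =
      if (j : ℤ) ≤ (i : ℤ) then
        (if (i : ℤ) ≤ -1 then ((j : ℤ) : ℚ)
         else if (j : ℤ) < 0 then ((j : ℤ) : ℚ) / 2
         else if (i : ℤ) = (j : ℤ) then 1 / 4 else -(1 / 4))
      else
        (if (j : ℤ) ≤ -1 then ((i : ℤ) : ℚ)
         else if (i : ℤ) < 0 then ((i : ℤ) : ℚ) / 2
         else if (j : ℤ) = (i : ℤ) then 1 / 4 else -(1 / 4)) := by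
    intro i j
    rcases le_or_gt (j : ℤ) (i : ℤ) with h | h
    · rw [if_pos h, hM i j h]
    · rw [if_neg (not_le.mpr h), ← hMsymm, hM j i h.le]
  have hMv : ∀ (a b : ℤ) (ha : a ≤ 1) (hb : b ≤ 1), M ⟨a, ha⟩ ⟨b, hb⟩ =
      if b ≤ a then
        (if a ≤ -1 then (b : ℚ)
         else if b < 0 then (b : ℚ) / 2
         else if a = b then 1 / 4 else -(1 / 4))
      else
        (if b ≤ -1 then (a : ℚ)
         else if a < 0 then (a : ℚ) / 2
         else if b = a then 1 / 4 else -(1 / 4)) := fun a b ha hb => hM' ⟨a, ha⟩ ⟨b, hb⟩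
  have hMlow : ∀ (a b : ℤ) (ha : a ≤ 1) (hb : b ≤ 1), a ≤ -1 → M ⟨a, ha⟩ ⟨b, hb⟩ =
      if b ≤ a then (b : ℚ) else if b ≤ -1 then (a : ℚ) else (a : ℚ) / 2 := by
    intro a b ha hb hlow
    rw [hMv]
    split_ifs <;> first | rfl | (exfalso; omega)
  have hsupp : ∀ (i j : {i : ℤ // i ≤ 1}) (s : Finset {i : ℤ // i ≤ 1}),
      (∀ k, D i k ≠ 0 → k ∈ s) →
      (∑ᶠ k, D i k * M k j) = ∑ k ∈ s, D i k * M k j := by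
    intro i j s hs
    apply finsum_eq_finset_sum_of_support_subset
    intro k hk
    simp only [Function.mem_support] at hk
    exact hs k (fun h => hk (by rw [h, zero_mul]))
  have hDs : ∀ i k : {i : ℤ // i ≤ 1}, D i k ≠ 0 →
      (k : ℤ) = i ∨ (k : ℤ) + 1 = i ∨ (i : ℤ) + 1 = k ∨
      ((i : ℤ) = 1 ∧ (k : ℤ) = -1) ∨ ((i : ℤ) = -1 ∧ (k : ℤ) = 1) := by
    intro i k h
    rw [hD] at h
    split_ifs at h with h1 h2 h3 h4 <;> first | omega | exact absurd rfl h
  rcases (by omega : iv = 0 ∨ iv = 1) with hiv | hiv <;> subst hiv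
  · -- iv = 0
    have e1 : (-1 : ℤ) ≤ 1 := by norm_num
    have e0 : (0 : ℤ) ≤ 1 := by norm_num
    have e3 : (1 : ℤ) ≤ 1 := le_refl 1
    have m1 : (⟨-1, e1⟩ : {i : ℤ // i ≤ 1}) ∉
        ({⟨0, e0⟩, ⟨1, e3⟩} : Finset {i : ℤ // i ≤ 1}) := by
      simp only [Finset.mem_insert, Finset.mem_singleton, Subtype.mk.injEq]
      omega
    have m2 : (⟨0, e0⟩ : {i : ℤ // i ≤ 1}) ∉
        ({⟨1, e3⟩} : Finset {i : ℤ // i ≤ 1}) := by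
      simp only [Finset.mem_singleton, Subtype.mk.injEq]
      omega
    rw [hsupp ⟨0, e0⟩ ⟨jv, hj⟩
        ({⟨-1, e1⟩, ⟨0, e0⟩, ⟨1, e3⟩} : Finset _)
        (by
          rintro ⟨kv, hk⟩ hne
          have := hDs _ _ hne
          simp only [Finset.mem_insert, Finset.mem_singleton, Subtype.mk.injEq] at this ⊢
          omega)]
    rw [Finset.sum_insert m1, Finset.sum_insert m2, Finset.sum_singleton]
    have d1 : D ⟨0, e0⟩ ⟨-1, e1⟩ = -1 := by
      rw [hDv]; norm_num
    have d2 : D ⟨0, e0⟩ ⟨0, e0⟩ = 2 := by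
      rw [hDv]; norm_num
    have d3 : D ⟨0, e0⟩ ⟨1, e3⟩ = 0 := by
      rw [hDv]; norm_num
    rw [d1, d2, d3,
        hMlow (-1) jv e1 hj (by norm_num),
        hMv 0 jv e0 hj, hMv 1 jv e3 hj]
    clear * - hj
    split_ifs <;>
      first
        | (exfalso; omega)
        | (push_cast; ring1)
        | (have h' : jv = iv := (by omega); subst h'; push_cast; ring1)
        | (have h' : jv = iv + 1 := (by omega); subst h'; push_cast; ring1)
        | (have h' : jv = iv - 1 := (by omega); subst h'; push_cast; ring1)
        | (have h' : jv = -2 := (by omega); subst h'; push_cast; ring1)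
        | (have h' : jv = -1 := (by omega); subst h'; push_cast; ring1)
        | (have h' : jv = 0 := (by omega); subst h'; push_cast; ring1)
        | (have h' : jv = 1 := (by omega); subst h'; push_cast; ring1)
        | norm_num
  · -- iv = 1
    have e1 : (-1 : ℤ) ≤ 1 := by norm_num
    have e0 : (0 : ℤ) ≤ 1 := by norm_num
    have e3 : (1 : ℤ) ≤ 1 := le_refl 1
    have m1 : (⟨-1, e1⟩ : {i : ℤ // i ≤ 1}) ∉
        ({⟨0, e0⟩, ⟨1, e3⟩} : Finset {i : ℤ // i ≤ 1}) := by
      simp only [Finset.mem_insert, Finset.mem_singleton, Subtype.mk.injEq]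
      omega
    have m2 : (⟨0, e0⟩ : {i : ℤ // i ≤ 1}) ∉
        ({⟨1, e3⟩} : Finset {i : ℤ // i ≤ 1}) := by
      simp only [Finset.mem_singleton, Subtype.mk.injEq]
      omega
    rw [hsupp ⟨1, e3⟩ ⟨jv, hj⟩
        ({⟨-1, e1⟩, ⟨0, e0⟩, ⟨1, e3⟩} : Finset _)
        (by
          rintro ⟨kv, hk⟩ hne
          have := hDs _ _ hne
          simp only [Finset.mem_insert, Finset.mem_singleton, Subtype.mk.injEq] at this ⊢
          omega)]
    rw [Finset.sum_insert m1, Finset.sum_insert m2, Finset.sum_singleton]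
    have d1 : D ⟨1, e3⟩ ⟨-1, e1⟩ = -1 := by
      rw [hDv]; norm_num
    have d2 : D ⟨1, e3⟩ ⟨0, e0⟩ = 0 := by
      rw [hDv]; norm_num
    have d3 : D ⟨1, e3⟩ ⟨1, e3⟩ = 2 := by
      rw [hDv]; norm_num
    rw [d1, d2, d3,
        hMlow (-1) jv e1 hj (by norm_num),
        hMv 0 jv e0 hj, hMv 1 jv e3 hj]
    clear * - hj
    split_ifs <;>
      first
        | (exfalso; omega)
        | (push_cast; ring1)
        | (have h' : jv = iv := (by omega); subst h'; push_cast; ring1)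
        | (have h' : jv = iv + 1 := (by omega); subst h'; push_cast; ring1)
        | (have h' : jv = iv - 1 := (by omega); subst h'; push_cast; ring1)
        | (have h' : jv = -2 := (by omega); subst h'; push_cast; ring1)
        | (have h' : jv = -1 := (by omega); subst h'; push_cast; ring1)
        | (have h' : jv = 0 := (by omega); subst h'; push_cast; ring1)
        | (have h' : jv = 1 := (by omega); subst h'; push_cast; ring1)
        | norm_num

/-- The infinite Cartan matrix `D_∞` of type `D`, indexed by the integers `≤ 1`, with
`D_{ii} = 2` for all `i`, `D_{i,i-1} = D_{i-1,i} = -1` for `i ≤ 0`,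
`D_{1,-1} = D_{-1,1} = -1`, `D_{0,1} = D_{1,0} = 0`, and `0` elsewhere, has as a two-sided
inverse the symmetric array `M` with (for `j ≤ i ≤ 1`) `M_{00} = M_{11} = 1/4`,
`M_{10} = -1/4`, `M_{ij} = j/2` if `j < 0` and `i ∈ {0, 1}`, and `M_{ij} = j` if
`j ≤ i ≤ -1`: for all `i, j ≤ 1`, the (finitely supported) sums `Σ_k D_{ik} M_{kj}` and
`Σ_k M_{ik} D_{kj}` both equal `1` if `i = j` and `0` otherwise. -/
theorem stmt_15 (D M : {i : ℤ // i ≤ 1} → {i : ℤ // i ≤ 1} → ℚ)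
    (hD : ∀ i j : {i : ℤ // i ≤ 1}, D i j =
      if (i : ℤ) = (j : ℤ) then 2
      else if ((i : ℤ) = 1 ∧ (j : ℤ) = -1) ∨ ((i : ℤ) = -1 ∧ (j : ℤ) = 1) then -1
      else if ((i : ℤ) = 0 ∧ (j : ℤ) = 1) ∨ ((i : ℤ) = 1 ∧ (j : ℤ) = 0) then 0
      else if (i : ℤ) + 1 = (j : ℤ) ∨ (j : ℤ) + 1 = (i : ℤ) then -1
      else 0)
    (hMsymm : ∀ i j : {i : ℤ // i ≤ 1}, M j i = M i j)
    (hM : ∀ i j : {i : ℤ // i ≤ 1}, (j : ℤ) ≤ (i : ℤ) → M i j =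
      if (i : ℤ) ≤ -1 then ((j : ℤ) : ℚ)
      else if (j : ℤ) < 0 then ((j : ℤ) : ℚ) / 2
      else if (i : ℤ) = (j : ℤ) then 1 / 4
      else -(1 / 4)) :
    ∀ i j : {i : ℤ // i ≤ 1},
      (∑ᶠ k : {i : ℤ // i ≤ 1}, D i k * M k j) = (if i = j then 1 else 0) ∧
      (∑ᶠ k : {i : ℤ // i ≤ 1}, M i k * D k j) = (if i = j then 1 else 0) := by
  have hDsymm : ∀ i j, D i j = D j i := by
    intro i j
    rw [hD, hD]
    split_ifs <;> first | rfl | (exfalso; omega)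
  have key : ∀ i j : {i : ℤ // i ≤ 1},
      (∑ᶠ k, D i k * M k j) = if i = j then (1 : ℚ) else 0 := by
    rintro ⟨iv, hi⟩ ⟨jv, hj⟩
    simp only [Subtype.mk.injEq]
    rcases le_or_gt iv (-1) with h | h
    · exact stmt15_auxA D M hD hMsymm hM iv jv hi hj h
    · exact stmt15_auxB D M hD hMsymm hM iv jv hi hj (by omega)
  intro i j
  refine ⟨key i j, ?_⟩
  have hpt : ∀ k, M i k * D k j = D j k * M k i := by
    intro k
    rw [mul_comm, hDsymm k j, hMsymm k i]
  calc (∑ᶠ k, M i k * D k j) = ∑ᶠ k, D j k * M k i := finsum_congr hpt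
    _ = if j = i then 1 else 0 := key j i
    _ = if i = j then 1 else 0 := by
        rcases eq_or_ne i j with h | h
        · simp [h]
        · simp [h, Ne.symm h]
end

section
/- Fix an integer m ≥ 0. Let A be the array over ℚ indexed by positive integers with A_{ii} = 2 for 1 ≤ i ≤ m, A_{i,i+1} = A_{i+1,i} = −1 for 1 ≤ i ≤ m, A_{m+1,m+1} = 0, A_{m+1,m+2} = A_{m+2,m+1} = 1, A_{ii} = −2 for i ≥ m+2, A_{i,i+1} = A_{i+1,i} = 1 for i ≥ m+2, and all other entries 0; let M be the array with M_{ij} = min{i,j} if min{i,j} ≤ m+1, and M_{ij} = 2(m+1) − min{i,j} if both i, j ≥ m+2. Then M is a two-sided inverse of A: for all positive integers i, j, the sums Σ_k A_{ik} M_{kj} and Σ_k M_{ik} A_{kj} (each having only finitely many nonzero terms) both equal 1 if i = j and 0 if i ≠ j. -/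
set_option linter.unusedTactic false
set_option linter.unreachableTactic false

private theorem key_row (m n q : ℕ) (hn : 2 ≤ n) (hq : 1 ≤ q) :
    (if n - 1 ≤ m then (-1 : ℚ) else 1) *
      (if min (n-1) q ≤ m + 1 then ((min (n-1) q : ℕ) : ℚ) else 2*((m:ℚ)+1) - ((min (n-1) q : ℕ) : ℚ))
    + (if n ≤ m then (2:ℚ) else if n = m + 1 then 0 else -2) *
      (if min n q ≤ m + 1 then ((min n q : ℕ) : ℚ) else 2*((m:ℚ)+1) - ((min n q : ℕ) : ℚ))
    + (if n ≤ m then (-1:ℚ) else 1) *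
      (if min (n+1) q ≤ m + 1 then ((min (n+1) q : ℕ) : ℚ) else 2*((m:ℚ)+1) - ((min (n+1) q : ℕ) : ℚ))
    = if n = q then 1 else 0 := by
  obtain ⟨p, rfl⟩ : ∃ p, n = p + 2 := ⟨n - 2, by omega⟩
  rcases lt_trichotomy q (p+2) with h | h | h
  · rw [show p + 2 - 1 = p + 1 from rfl, min_eq_right (by omega : q ≤ p+1),
      min_eq_right (by omega : q ≤ p+2), min_eq_right (by omega : q ≤ p+3)]
    split_ifs <;>
      first
        | (exfalso; omega)
        | (push_cast; ring1)
        | ((obtain rfl : m = p := by omega); push_cast; ring1)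
        | ((obtain rfl : m = p + 1 := by omega); push_cast; ring1)
        | ((obtain rfl : m = p + 2 := by omega); push_cast; ring1)
  · subst h
    rw [show p + 2 - 1 = p + 1 from rfl, min_eq_left (by omega : p+1 ≤ p+2), min_self,
      min_eq_right (by omega : (p+2 : ℕ) ≤ p+3)]
    split_ifs <;>
      first
        | (exfalso; omega)
        | (push_cast; ring1)
        | ((obtain rfl : m = p := by omega); push_cast; ring1)
        | ((obtain rfl : m = p + 1 := by omega); push_cast; ring1)
        | ((obtain rfl : m = p + 2 := by omega); push_cast; ring1)
  · rw [show p + 2 - 1 = p + 1 from rfl, min_eq_left (by omega : p+1 ≤ q),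
      min_eq_left (by omega : p+2 ≤ q), min_eq_left (by omega : p+3 ≤ q)]
    split_ifs <;>
      first
        | (exfalso; omega)
        | (push_cast; ring1)
        | ((obtain rfl : m = p := by omega); push_cast; ring1)
        | ((obtain rfl : m = p + 1 := by omega); push_cast; ring1)
        | ((obtain rfl : m = p + 2 := by omega); push_cast; ring1)

private theorem key_one (m q : ℕ) (hq : 1 ≤ q) :
    (if 1 ≤ m then (2:ℚ) else 0) * 1
    + (if 1 ≤ m then (-1:ℚ) else 1) *
      (if min 2 q ≤ m + 1 then ((min 2 q : ℕ) : ℚ) else 2*((m:ℚ)+1) - ((min 2 q : ℕ) : ℚ))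
    = if 1 = q then 1 else 0 := by
  rcases eq_or_lt_of_le hq with h | h
  · rw [← h, min_eq_right (by omega : 1 ≤ 2)]
    split_ifs <;>
      first
        | (exfalso; omega)
        | (norm_num; done)
  · rw [min_eq_left (by omega : 2 ≤ q)]
    split_ifs <;>
      first
        | (exfalso; omega)
        | (norm_num; done)
        | (push_cast; ring1)
        | ((obtain rfl : m = 0 := by omega); norm_num; done)

/-- Fix an integer `m ≥ 0`.  The distinguished Cartan matrix `A_{m,∞}` of the
infinite-rank Lie superalgebra `A(m,∞)`, indexed by the positive integers, with
`A_{ii} = 2` for `i ≤ m`, `A_{m+1,m+1} = 0`, `A_{ii} = -2` for `i ≥ m+2`, entries `-1`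
between consecutive indices `i, i+1` with `i ≤ m`, entries `1` between consecutive indices
`i, i+1` with `i ≥ m+1`, and `0` elsewhere, has as a two-sided inverse the array `M` with
`M_{ij} = min{i,j}` if `min{i,j} ≤ m+1` and `M_{ij} = 2(m+1) - min{i,j}` if both
`i, j ≥ m+2`: for all positive integers `i, j`, the (finitely supported) sums
`Σ_k A_{ik} M_{kj}` and `Σ_k M_{ik} A_{kj}` both equal `1` if `i = j` and `0` otherwise. -/
theorem stmt_16 (m : ℕ) (A M : ℕ+ → ℕ+ → ℚ)
    (hA : ∀ i j : ℕ+, A i j =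
      if i = j then (if (i : ℕ) ≤ m then 2 else if (i : ℕ) = m + 1 then 0 else -2)
      else if (i : ℕ) + 1 = (j : ℕ) ∨ (j : ℕ) + 1 = (i : ℕ) then
        (if min (i : ℕ) (j : ℕ) ≤ m then -1 else 1)
      else 0)
    (hM : ∀ i j : ℕ+, M i j =
      if min (i : ℕ) (j : ℕ) ≤ m + 1 then ((min (i : ℕ) (j : ℕ) : ℕ) : ℚ)
      else 2 * ((m : ℚ) + 1) - ((min (i : ℕ) (j : ℕ) : ℕ) : ℚ)) :
    ∀ i j : ℕ+,
      (∑ᶠ k : ℕ+, A i k * M k j) = (if i = j then 1 else 0) ∧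
      (∑ᶠ k : ℕ+, M i k * A k j) = (if i = j then 1 else 0) := by
  have hA0 : ∀ i k : ℕ+, i ≠ k → (i : ℕ) + 1 ≠ (k : ℕ) → (k : ℕ) + 1 ≠ (i : ℕ) →
      A i k = 0 := by
    intro i k h1 h2 h3
    rw [hA, if_neg h1, if_neg (fun h => h.elim h2 h3)]
  have hAs : ∀ i j : ℕ+, A i j = A j i := by
    intro i j
    rcases eq_or_ne i j with rfl | h
    · rfl
    · rw [hA i j, hA j i, if_neg h, if_neg (Ne.symm h)]
      exact if_congr or_comm (if_congr (by rw [min_comm]) rfl rfl) rfl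
  have hMs : ∀ i j : ℕ+, M i j = M j i := by
    intro i j; rw [hM, hM, min_comm]
  have row : ∀ i j : ℕ+, (∑ᶠ k : ℕ+, A i k * M k j) = if i = j then 1 else 0 := by
    intro i j
    have hq : 1 ≤ (j : ℕ) := j.pos
    have hij : (if i = j then (1:ℚ) else 0) = if (i:ℕ) = (j:ℕ) then 1 else 0 := by
      simp [PNat.coe_inj]
    by_cases h1 : i = 1
    · subst h1
      rw [finsum_eq_sum_of_support_subset (s := ({1, 2} : Finset ℕ+)) _ ?_]
      · rw [Finset.sum_pair (by decide : (1:ℕ+) ≠ 2)]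
        have e11 : A 1 1 = if 1 ≤ m then (2:ℚ) else 0 := by
          rw [hA, if_pos rfl, PNat.one_coe]
          rcases Nat.eq_zero_or_pos m with rfl | hm
          · norm_num
          · rw [if_pos (by omega : 1 ≤ m), if_pos (by omega : 1 ≤ m)]
        have e12 : A 1 2 = if 1 ≤ m then (-1:ℚ) else 1 := by
          rw [hA, if_neg (by decide),
            if_pos (Or.inl (show ((1:ℕ+):ℕ)+1 = ((2:ℕ+):ℕ) from rfl))]
          norm_num
        have f1 : M 1 j = 1 := by
          rw [hM, PNat.one_coe, min_eq_left hq]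
          norm_num
        have f2 : M 2 j =
            if min 2 (j:ℕ) ≤ m + 1 then ((min 2 (j:ℕ) : ℕ) : ℚ)
            else 2*((m:ℚ)+1) - ((min 2 (j:ℕ) : ℕ) : ℚ) := by
          rw [hM]; rfl
        rw [e11, e12, f1, f2, hij, PNat.one_coe]
        exact key_one m (j:ℕ) hq
      · intro k hk
        simp only [Finset.coe_insert, Finset.coe_singleton, Set.mem_insert_iff,
          Set.mem_singleton_iff]
        by_contra hc
        push_neg at hc
        have hk1 : (k:ℕ) ≠ 1 := fun h => hc.1 (PNat.coe_inj.mp (by rw [h]; rfl))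
        have hk2 : (k:ℕ) ≠ 2 := fun h => hc.2 (PNat.coe_inj.mp (by rw [h]; rfl))
        apply hk
        show A 1 k * M k j = 0
        rw [hA0 1 k (fun h => hk1 (by rw [← h]; rfl)) (by rw [PNat.one_coe]; omega)
          (by have := k.pos; rw [PNat.one_coe]; omega), zero_mul]
    · have hn : 2 ≤ (i : ℕ) := by
        rcases Nat.lt_or_ge (i:ℕ) 2 with h | h
        · exact absurd (PNat.coe_inj.mp
            (by rw [PNat.one_coe]; have := i.pos; omega : (i:ℕ) = ((1:ℕ+):ℕ))) h1
        · exact h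
      have hsub : ((i - 1 : ℕ+) : ℕ) = (i : ℕ) - 1 := by
        rw [PNat.sub_coe, if_pos (by rw [← PNat.coe_lt_coe, PNat.one_coe]; omega), PNat.one_coe]
      have hadd : ((i + 1 : ℕ+) : ℕ) = (i : ℕ) + 1 := by
        rw [PNat.add_coe, PNat.one_coe]
      rw [finsum_eq_sum_of_support_subset (s := ({i - 1, i, i + 1} : Finset ℕ+)) _ ?_]
      · rw [Finset.sum_insert (by
            simp only [Finset.mem_insert, Finset.mem_singleton]
            push_neg
            exact ⟨fun h => by have := PNat.coe_inj.mpr h; rw [hsub] at this; omega,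
              fun h => by have := PNat.coe_inj.mpr h; rw [hsub, hadd] at this; omega⟩),
          Finset.sum_insert (by
            simp only [Finset.mem_singleton]
            exact fun h => by have := PNat.coe_inj.mpr h; rw [hadd] at this; omega),
          Finset.sum_singleton]
        have eL : A i (i - 1) = if (i:ℕ) - 1 ≤ m then (-1:ℚ) else 1 := by
          rw [hA, if_neg (fun h => by rw [← PNat.coe_inj, hsub] at h; omega),
            if_pos (Or.inr (by rw [hsub]; omega)), hsub, min_eq_right (by omega)]
        have eD : A i i = if (i:ℕ) ≤ m then (2:ℚ) else if (i:ℕ) = m + 1 then 0 else -2 := by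
          rw [hA, if_pos rfl]
        have eR : A i (i + 1) = if (i:ℕ) ≤ m then (-1:ℚ) else 1 := by
          rw [hA, if_neg (fun h => by rw [← PNat.coe_inj, hadd] at h; omega),
            if_pos (Or.inl (by rw [hadd])), hadd, min_eq_left (by omega)]
        have fL : M (i - 1) j =
            if min ((i:ℕ) - 1) (j:ℕ) ≤ m + 1 then ((min ((i:ℕ) - 1) (j:ℕ) : ℕ) : ℚ)
            else 2*((m:ℚ)+1) - ((min ((i:ℕ) - 1) (j:ℕ) : ℕ) : ℚ) := by
          rw [hM, hsub]
        have fD : M i j =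
            if min (i:ℕ) (j:ℕ) ≤ m + 1 then ((min (i:ℕ) (j:ℕ) : ℕ) : ℚ)
            else 2*((m:ℚ)+1) - ((min (i:ℕ) (j:ℕ) : ℕ) : ℚ) := by
          rw [hM]
        have fR : M (i + 1) j =
            if min ((i:ℕ) + 1) (j:ℕ) ≤ m + 1 then ((min ((i:ℕ) + 1) (j:ℕ) : ℕ) : ℚ)
            else 2*((m:ℚ)+1) - ((min ((i:ℕ) + 1) (j:ℕ) : ℕ) : ℚ) := by
          rw [hM, hadd]
        rw [eL, eD, eR, fL, fD, fR, hij, ← add_assoc]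
        exact key_row m (i:ℕ) (j:ℕ) hn hq
      · intro k hk
        simp only [Finset.coe_insert, Finset.coe_singleton, Set.mem_insert_iff,
          Set.mem_singleton_iff]
        by_contra hc
        push_neg at hc
        have c1 : (k:ℕ) ≠ (i:ℕ) - 1 := fun h => hc.1 (PNat.coe_inj.mp (by rw [h, hsub]))
        have c2 : (k:ℕ) ≠ (i:ℕ) := fun h => hc.2.1 (PNat.coe_inj.mp h)
        have c3 : (k:ℕ) ≠ (i:ℕ) + 1 := fun h => hc.2.2 (PNat.coe_inj.mp (by rw [h, hadd]))
        apply hk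
        show A i k * M k j = 0
        rw [hA0 i k (fun h => c2 (PNat.coe_inj.mpr h).symm) (by omega)
          (by have := k.pos; omega), zero_mul]
  have col : ∀ i j : ℕ+, (∑ᶠ k : ℕ+, M i k * A k j) = if i = j then 1 else 0 := by
    intro i j
    have : (∑ᶠ k : ℕ+, M i k * A k j) = ∑ᶠ k : ℕ+, A j k * M k i :=
      finsum_congr fun k => by rw [hAs j k, hMs i k, mul_comm]
    rw [this, row j i]
    rcases eq_or_ne i j with rfl | h
    · rfl
    · rw [if_neg h, if_neg (Ne.symm h)]
  exact fun i j => ⟨row i j, col i j⟩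
end

section
/- Let A be the array over ℚ indexed by all integers with A_{ii} = 2 for i ≤ −1, A_{00} = 0, A_{ii} = −2 for i ≥ 1, A_{i,i+1} = A_{i+1,i} = −1 for i ≤ −1, A_{0,1} = A_{1,0} = 1, A_{i,i+1} = A_{i+1,i} = 1 for i ≥ 1, and all other entries 0; let M be the array with M_{ij} = min{i,j} − 1 if i ≤ 0 and j ≤ 0; M_{ij} = i − 1 if i ≤ 0 and j ≥ 1; M_{ij} = j − 1 if j ≤ 0 and i ≥ 1; and M_{ij} = −min{i,j} − 1 if i ≥ 1 and j ≥ 1. Then M is a two-sided inverse of A: for all integers i, j, the sums Σ_k A_{ik} M_{kj} and Σ_k M_{ik} A_{kj} (each having only finitely many nonzero terms) both equal 1 if i = j and 0 if i ≠ j. -/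
private def aZ (i j : ℤ) : ℤ :=
  if i = j then (if i ≤ -1 then 2 else if i = 0 then 0 else -2)
  else if i + 1 = j ∨ j + 1 = i then (if min i j ≤ -1 then -1 else 1)
  else 0

private def mZ (i j : ℤ) : ℤ :=
  if i ≤ 0 then (if j ≤ 0 then min i j - 1 else i - 1)
  else (if j ≤ 0 then j - 1 else -min i j - 1)

private lemma aZ_symm (i j : ℤ) : aZ i j = aZ j i := by
  unfold aZ; split_ifs <;> omega

private lemma aZ_left (i : ℤ) : aZ i (i - 1) = if i ≤ 0 then -1 else 1 := by
  unfold aZ; split_ifs <;> omega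

private lemma aZ_right (i : ℤ) : aZ i (i + 1) = if i ≤ -1 then -1 else 1 := by
  unfold aZ; split_ifs <;> omega

private lemma aZ_diag (i : ℤ) :
    aZ i i = if i ≤ -1 then 2 else if i = 0 then 0 else -2 := by
  unfold aZ; split_ifs <;> omega

private lemma aZ_supp {i k : ℤ} (h : aZ i k ≠ 0) : k = i - 1 ∨ k = i ∨ k = i + 1 := by
  unfold aZ at h; split_ifs at h <;> omega

private lemma keyZ1 (i j : ℤ) :
    aZ i (i - 1) * mZ (i - 1) j + aZ i i * mZ i j + aZ i (i + 1) * mZ (i + 1) j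
      = if i = j then 1 else 0 := by
  rw [aZ_left, aZ_right, aZ_diag]
  unfold mZ; split_ifs <;> omega

private lemma keyZ2 (i j : ℤ) :
    mZ i (j - 1) * aZ (j - 1) j + mZ i j * aZ j j + mZ i (j + 1) * aZ (j + 1) j
      = if i = j then 1 else 0 := by
  rw [aZ_symm (j-1) j, aZ_symm (j+1) j, aZ_left, aZ_right, aZ_diag]
  unfold mZ; split_ifs <;> omega

private lemma key_sum (f : ℤ → ℚ) (c : ℤ)
    (h : Function.support f ⊆ (({c - 1, c, c + 1} : Finset ℤ) : Set ℤ)) :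
    ∑ᶠ k, f k = f (c - 1) + f c + f (c + 1) := by
  rw [finsum_eq_finset_sum_of_support_subset f h]
  rw [show ({c - 1, c, c + 1} : Finset ℤ) = insert (c - 1) (insert c {c + 1}) from rfl]
  rw [Finset.sum_insert (by simp only [Finset.mem_insert, Finset.mem_singleton]; omega),
    Finset.sum_insert (by simp only [Finset.mem_singleton]; omega), Finset.sum_singleton]
  ring

/-- The distinguished Cartan matrix `A_{∞,∞}` of the doubly infinite Lie superalgebra
`A(∞,∞)`, indexed by the integers, with `A_{ii} = 2` for `i ≤ -1`, `A_{00} = 0`,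
`A_{ii} = -2` for `i ≥ 1`, entries `-1` between consecutive indices `i, i+1` with
`i ≤ -1`, entries `1` between consecutive indices `i, i+1` with `i ≥ 0`, and `0`
elsewhere, has as a two-sided inverse the array `M` with `M_{ij} = min{i,j} - 1` if
`i, j ≤ 0`; `M_{ij} = i - 1` if `i ≤ 0 ≤ 1 ≤ j`; `M_{ij} = j - 1` if `j ≤ 0 ≤ 1 ≤ i`;
and `M_{ij} = -min{i,j} - 1` if `i, j ≥ 1`: for all integers `i, j`, the (finitely
supported) sums `Σ_k A_{ik} M_{kj}` and `Σ_k M_{ik} A_{kj}` both equal `1` if `i = j`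
and `0` otherwise. -/
theorem stmt_17 (A M : ℤ → ℤ → ℚ)
    (hA : ∀ i j : ℤ, A i j =
      if i = j then (if i ≤ -1 then 2 else if i = 0 then 0 else -2)
      else if i + 1 = j ∨ j + 1 = i then (if min i j ≤ -1 then -1 else 1)
      else 0)
    (hM : ∀ i j : ℤ, M i j =
      if i ≤ 0 then
        (if j ≤ 0 then ((min i j : ℤ) : ℚ) - 1 else (i : ℚ) - 1)
      else
        (if j ≤ 0 then (j : ℚ) - 1 else -((min i j : ℤ) : ℚ) - 1)) :
    ∀ i j : ℤ,
      (∑ᶠ k : ℤ, A i k * M k j) = (if i = j then 1 else 0) ∧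
      (∑ᶠ k : ℤ, M i k * A k j) = (if i = j then 1 else 0) := by
  have hAc : ∀ i j, A i j = (aZ i j : ℚ) := by
    intro i j; rw [hA]; unfold aZ; split_ifs <;> push_cast <;> ring
  have hMc : ∀ i j, M i j = (mZ i j : ℚ) := by
    intro i j; rw [hM]; unfold mZ; split_ifs <;> push_cast <;> ring
  intro i j
  have hd : (if i = j then (1 : ℚ) else 0) = ((if i = j then (1 : ℤ) else 0 : ℤ) : ℚ) := by
    split_ifs <;> simp
  constructor
  · have h1 : ∑ᶠ k, A i k * M k j
        = A i (i - 1) * M (i - 1) j + A i i * M i j + A i (i + 1) * M (i + 1) j := by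
      apply key_sum _ i
      intro k hk
      simp only [Function.mem_support] at hk
      have hne : aZ i k ≠ 0 := by
        intro h0; apply hk; rw [hAc, h0]; simp
      simp only [Finset.coe_insert, Set.mem_insert_iff, Finset.coe_singleton,
        Set.mem_singleton_iff]
      rcases aZ_supp hne with h | h | h <;> tauto
    rw [h1, hAc, hAc, hAc, hMc, hMc, hMc, hd, ← keyZ1 i j]
    push_cast; ring
  · have h1 : ∑ᶠ k, M i k * A k j
        = M i (j - 1) * A (j - 1) j + M i j * A j j + M i (j + 1) * A (j + 1) j := by
      apply key_sum _ j
      intro k hk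
      simp only [Function.mem_support] at hk
      have hne : aZ k j ≠ 0 := by
        intro h0; apply hk; rw [hAc, h0]; simp
      have hne' : aZ j k ≠ 0 := by rwa [aZ_symm]
      simp only [Finset.coe_insert, Set.mem_insert_iff, Finset.coe_singleton,
        Set.mem_singleton_iff]
      rcases aZ_supp hne' with h | h | h <;> tauto
    rw [h1, hAc, hAc, hAc, hMc, hMc, hMc, hd, ← keyZ2 i j]
    push_cast; ring
end

section
/- Fix an integer m ≥ 2. Let B be the array over ℚ indexed by the integers i, j ≤ m with B_{ii} = −2 for i ≤ −1, B_{i,i+1} = B_{i+1,i} = 1 for i ≤ −2, B_{−1,0} = B_{0,−1} = 1, B_{00} = 0, B_{0,1} = B_{1,0} = −1, B_{ii} = 2 for 1 ≤ i ≤ m, B_{i,i+1} = −1 for 1 ≤ i ≤ m−2, B_{m−1,m} = −2, B_{i+1,i} = −1 for 1 ≤ i ≤ m−1, and all other entries 0; let M be the array with M_{mj} = |j|/2 for all j ≤ m, M_{ij} = −min{i,j} if i < m and (i ≤ 0 or j ≤ 0), and M_{ij} = min{i,j} if 0 < i < m and 0 < j ≤ m. Then M is a two-sided inverse of B: for all i,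 j ≤ m, the sums Σ_k B_{ik} M_{kj} and Σ_k M_{ik} B_{kj} (each having only finitely many nonzero terms) both equal 1 if i = j and 0 if i ≠ j. -/
noncomputable def bE (m i j : ℤ) : ℚ :=
  if i = j then (if i ≤ -1 then -2 else if i = 0 then 0 else 2)
  else if i + 1 = j then
    (if i ≤ -1 then 1 else if i = 0 then -1 else if j = m then -2 else -1)
  else if j + 1 = i then (if j ≤ -1 then 1 else -1)
  else 0

noncomputable def mE (m i j : ℤ) : ℚ :=
  if i = m then ((|j| : ℤ) : ℚ) / 2
  else if i ≤ 0 ∨ j ≤ 0 then -((min i j : ℤ) : ℚ)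
  else ((min i j : ℤ) : ℚ)

lemma bE_left (m i : ℤ) : bE m i (i-1) = if i - 1 ≤ -1 then 1 else -1 := by
  unfold bE; rw [if_neg (by omega), if_neg (by omega), if_pos (by omega)]

lemma bE_diag (m i : ℤ) : bE m i i = if i ≤ -1 then -2 else if i = 0 then 0 else 2 :=
  if_pos rfl

lemma bE_right (m i : ℤ) :
    bE m i (i+1) = if i ≤ -1 then 1 else if i = 0 then -1 else if i + 1 = m then -2 else -1 := by
  unfold bE; rw [if_neg (by omega), if_pos rfl]

lemma bE_up (m j : ℤ) : bE m (j-1) j =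
    if j - 1 ≤ -1 then 1 else if j - 1 = 0 then -1 else if j = m then -2 else -1 := by
  unfold bE; rw [if_neg (by omega), if_pos (by omega)]

lemma bE_dn (m j : ℤ) : bE m (j+1) j = if j ≤ -1 then 1 else -1 := by
  unfold bE; rw [if_neg (by omega), if_neg (by omega), if_pos (by omega)]

set_option maxHeartbeats 4000000 in
lemma key1 (m i j : ℤ) (hm : 2 ≤ m) (hi : i ≤ m) (hj : j ≤ m) :
    bE m i (i-1) * mE m (i-1) j + bE m i i * mE m i j +
      (if i + 1 ≤ m then bE m i (i+1) * mE m (i+1) j else 0) = if i = j then 1 else 0 := by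
  rw [bE_left, bE_diag, bE_right]
  simp only [mE]
  rw [if_neg (show ¬ i - 1 = m by omega)]
  rcases lt_trichotomy j i with hji | hji | hji
  · rw [min_eq_right (by omega : j ≤ i - 1), min_eq_right (by omega : j ≤ i),
      min_eq_right (by omega : j ≤ i + 1)]
    rcases le_or_gt 0 j with hj0 | hj0
    · rw [abs_of_nonneg hj0]
      split_ifs <;> first
        | omega
        | ((try push_cast); (try field_simp) <;> (try norm_cast) <;>
            (try simp only [Int.negSucc_eq]) <;> (try push_cast) <;> omega)
    · rw [abs_of_neg hj0]
      split_ifs <;> first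
        | omega
        | ((try push_cast); (try field_simp) <;> (try norm_cast) <;>
            (try simp only [Int.negSucc_eq]) <;> (try push_cast) <;> omega)
  · subst hji
    rw [min_eq_left (by omega : j - 1 ≤ j), min_self, min_eq_right (by omega : j ≤ j + 1)]
    rcases le_or_gt 0 j with hj0 | hj0
    · rw [abs_of_nonneg hj0]
      split_ifs <;> first
        | omega
        | ((try push_cast); (try field_simp) <;> (try norm_cast) <;>
            (try simp only [Int.negSucc_eq]) <;> (try push_cast) <;> omega)
    · rw [abs_of_neg hj0]
      split_ifs <;> first
        | omega
        | ((try push_cast); (try field_simp) <;> (try norm_cast) <;>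
            (try simp only [Int.negSucc_eq]) <;> (try push_cast) <;> omega)
  · rw [min_eq_left (by omega : i - 1 ≤ j), min_eq_left (by omega : i ≤ j),
      min_eq_left (by omega : i + 1 ≤ j)]
    rcases le_or_gt 0 j with hj0 | hj0
    · rw [abs_of_nonneg hj0]
      split_ifs <;> first
        | omega
        | ((try push_cast); (try field_simp) <;> (try norm_cast) <;>
            (try simp only [Int.negSucc_eq]) <;> (try push_cast) <;> omega)
    · rw [abs_of_neg hj0]
      split_ifs <;> first
        | omega
        | ((try push_cast); (try field_simp) <;> (try norm_cast) <;>
            (try simp only [Int.negSucc_eq]) <;> (try push_cast) <;> omega)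

set_option maxHeartbeats 4000000 in
lemma key2 (m i j : ℤ) (hm : 2 ≤ m) (hi : i ≤ m) (hj : j ≤ m) :
    mE m i (j-1) * bE m (j-1) j + mE m i j * bE m j j +
      (if j + 1 ≤ m then mE m i (j+1) * bE m (j+1) j else 0) = if i = j then 1 else 0 := by
  rw [bE_up, bE_diag, bE_dn]
  simp only [mE]
  rcases lt_trichotomy i j with hij | hij | hij
  · rw [min_eq_left (by omega : i ≤ j - 1), min_eq_left (by omega : i ≤ j),
      min_eq_left (by omega : i ≤ j + 1)]
    rcases lt_trichotomy j 0 with hj0 | rfl | hj0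
    · rw [abs_of_nonpos (by omega : j - 1 ≤ 0), abs_of_nonpos (by omega : j ≤ 0),
        abs_of_nonpos (by omega : j + 1 ≤ 0)]
      split_ifs <;> first
        | omega
        | ((try push_cast); (try field_simp) <;> (try norm_cast) <;>
            (try simp only [Int.negSucc_eq]) <;> (try push_cast) <;> omega)
    · simp only [show (0:ℤ)-1 = -1 by norm_num, show (0:ℤ)+1 = 1 by norm_num,
        abs_neg, abs_one, abs_zero]
      split_ifs <;> first
        | omega
        | ((try push_cast); (try field_simp) <;> (try norm_cast) <;>
            (try simp only [Int.negSucc_eq]) <;> (try push_cast) <;> omega)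
    · rw [abs_of_nonneg (by omega : (0:ℤ) ≤ j - 1), abs_of_nonneg (by omega : (0:ℤ) ≤ j),
        abs_of_nonneg (by omega : (0:ℤ) ≤ j + 1)]
      split_ifs <;> first
        | omega
        | ((try push_cast); (try field_simp) <;> (try norm_cast) <;>
            (try simp only [Int.negSucc_eq]) <;> (try push_cast) <;> omega)
  · rw [hij]
    rw [min_eq_right (by omega : j - 1 ≤ j), min_self, min_eq_left (by omega : j ≤ j + 1)]
    rcases lt_trichotomy j 0 with hj0 | rfl | hj0
    · rw [abs_of_nonpos (by omega : j - 1 ≤ 0), abs_of_nonpos (by omega : j ≤ 0),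
        abs_of_nonpos (by omega : j + 1 ≤ 0)]
      split_ifs <;> first
        | omega
        | ((try push_cast); (try field_simp) <;> (try norm_cast) <;>
            (try simp only [Int.negSucc_eq]) <;> (try push_cast) <;> omega)
    · simp only [show (0:ℤ)-1 = -1 by norm_num, show (0:ℤ)+1 = 1 by norm_num,
        abs_neg, abs_one, abs_zero]
      split_ifs <;> first
        | omega
        | ((try push_cast); (try field_simp) <;> (try norm_cast) <;>
            (try simp only [Int.negSucc_eq]) <;> (try push_cast) <;> omega)
    · rw [abs_of_nonneg (by omega : (0:ℤ) ≤ j - 1), abs_of_nonneg (by omega : (0:ℤ) ≤ j),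
        abs_of_nonneg (by omega : (0:ℤ) ≤ j + 1)]
      split_ifs <;> first
        | omega
        | ((try push_cast); (try field_simp) <;> (try norm_cast) <;>
            (try simp only [Int.negSucc_eq]) <;> (try push_cast) <;> omega)
  · rw [min_eq_right (by omega : j - 1 ≤ i), min_eq_right (by omega : j ≤ i),
      min_eq_right (by omega : j + 1 ≤ i)]
    rcases lt_trichotomy j 0 with hj0 | rfl | hj0
    · rw [abs_of_nonpos (by omega : j - 1 ≤ 0), abs_of_nonpos (by omega : j ≤ 0),
        abs_of_nonpos (by omega : j + 1 ≤ 0)]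
      split_ifs <;> first
        | omega
        | ((try push_cast); (try field_simp) <;> (try norm_cast) <;>
            (try simp only [Int.negSucc_eq]) <;> (try push_cast) <;> omega)
    · simp only [show (0:ℤ)-1 = -1 by norm_num, show (0:ℤ)+1 = 1 by norm_num,
        abs_neg, abs_one, abs_zero]
      split_ifs <;> first
        | omega
        | ((try push_cast); (try field_simp) <;> (try norm_cast) <;>
            (try simp only [Int.negSucc_eq]) <;> (try push_cast) <;> omega)
    · rw [abs_of_nonneg (by omega : (0:ℤ) ≤ j - 1), abs_of_nonneg (by omega : (0:ℤ) ≤ j),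
        abs_of_nonneg (by omega : (0:ℤ) ≤ j + 1)]
      split_ifs <;> first
        | omega
        | ((try push_cast); (try field_simp) <;> (try norm_cast) <;>
            (try simp only [Int.negSucc_eq]) <;> (try push_cast) <;> omega)

lemma finsum_three (m a : ℤ) (ha : a ≤ m) (f : {i : ℤ // i ≤ m} → ℚ)
    (h : ∀ k : {i : ℤ // i ≤ m}, (k : ℤ) ≠ a - 1 → (k : ℤ) ≠ a → (k : ℤ) ≠ a + 1 → f k = 0) :
    ∑ᶠ k, f k = f ⟨a - 1, by omega⟩ + f ⟨a, ha⟩ +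
      (if h' : a + 1 ≤ m then f ⟨a + 1, h'⟩ else 0) := by
  by_cases h' : a + 1 ≤ m
  · have hsub : Function.support f ⊆
        (({⟨a-1, by omega⟩, ⟨a, ha⟩, ⟨a+1, h'⟩} : Finset {i : ℤ // i ≤ m}) : Set _) := by
      intro k hk
      simp only [Finset.coe_insert, Set.mem_insert_iff, Finset.coe_singleton,
        Set.mem_singleton_iff]
      by_contra hc
      push_neg at hc
      exact hk (h k (fun e => hc.1 (Subtype.ext e)) (fun e => hc.2.1 (Subtype.ext e))
        (fun e => hc.2.2 (Subtype.ext e)))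
    rw [finsum_eq_sum_of_support_subset f hsub, dif_pos h']
    rw [Finset.sum_insert (by simp only [Finset.mem_insert, Finset.mem_singleton,
        Subtype.ext_iff, Subtype.coe_mk]; omega),
      Finset.sum_insert (by simp only [Finset.mem_insert, Finset.mem_singleton,
        Subtype.ext_iff, Subtype.coe_mk]; omega), Finset.sum_singleton, add_assoc]
  · have hsub : Function.support f ⊆
        (({⟨a-1, by omega⟩, ⟨a, ha⟩} : Finset {i : ℤ // i ≤ m}) : Set _) := by
      intro k hk
      simp only [Finset.coe_insert, Set.mem_insert_iff, Finset.coe_singleton,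
        Set.mem_singleton_iff]
      by_contra hc
      push_neg at hc
      refine hk (h k (fun e => hc.1 (Subtype.ext e)) (fun e => hc.2 (Subtype.ext e)) ?_)
      intro e
      exact h' (e ▸ k.2)
    rw [finsum_eq_sum_of_support_subset f hsub, dif_neg h']
    rw [Finset.sum_insert (by simp only [Finset.mem_insert, Finset.mem_singleton,
        Subtype.ext_iff, Subtype.coe_mk]; omega), Finset.sum_singleton, add_zero]

/-- Fix an integer `m ≥ 2`.  The distinguished Cartan matrix `B_{m,∞}` of the
infinite-rank Lie superalgebra `B(m,∞)`, indexed by the integers `≤ m`, with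
`B_{ii} = -2` for `i ≤ -1`, `B_{i,i+1} = B_{i+1,i} = 1` for `i ≤ -2`,
`B_{-1,0} = B_{0,-1} = 1`, `B_{00} = 0`, `B_{0,1} = B_{1,0} = -1`, `B_{ii} = 2` for
`1 ≤ i ≤ m`, `B_{i,i+1} = -1` for `1 ≤ i ≤ m-2`, `B_{m-1,m} = -2`, `B_{i+1,i} = -1` for
`1 ≤ i ≤ m-1`, and `0` elsewhere, has as a two-sided inverse the array `M` with
`M_{mj} = |j|/2` for all `j ≤ m`, `M_{ij} = -min{i,j}` if `i < m` and (`i ≤ 0` or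
`j ≤ 0`), and `M_{ij} = min{i,j}` if `0 < i < m` and `0 < j ≤ m`: for all `i, j ≤ m`,
the (finitely supported) sums `Σ_k B_{ik} M_{kj}` and `Σ_k M_{ik} B_{kj}` both equal
`1` if `i = j` and `0` otherwise. -/
theorem stmt_18 (m : ℤ) (hm : 2 ≤ m) (B M : {i : ℤ // i ≤ m} → {i : ℤ // i ≤ m} → ℚ)
    (hB : ∀ i j : {i : ℤ // i ≤ m}, B i j =
      if (i : ℤ) = (j : ℤ) then
        (if (i : ℤ) ≤ -1 then -2 else if (i : ℤ) = 0 then 0 else 2)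
      else if (i : ℤ) + 1 = (j : ℤ) then
        (if (i : ℤ) ≤ -1 then 1 else if (i : ℤ) = 0 then -1
         else if (j : ℤ) = m then -2 else -1)
      else if (j : ℤ) + 1 = (i : ℤ) then
        (if (j : ℤ) ≤ -1 then 1 else -1)
      else 0)
    (hM : ∀ i j : {i : ℤ // i ≤ m}, M i j =
      if (i : ℤ) = m then ((|(j : ℤ)| : ℤ) : ℚ) / 2
      else if (i : ℤ) ≤ 0 ∨ (j : ℤ) ≤ 0 then -((min (i : ℤ) (j : ℤ) : ℤ) : ℚ)
      else ((min (i : ℤ) (j : ℤ) : ℤ) : ℚ)) :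
    ∀ i j : {i : ℤ // i ≤ m},
      (∑ᶠ k : {i : ℤ // i ≤ m}, B i k * M k j) = (if i = j then 1 else 0) ∧
      (∑ᶠ k : {i : ℤ // i ≤ m}, M i k * B k j) = (if i = j then 1 else 0) := by
  have hBE : ∀ k l : {i : ℤ // i ≤ m}, B k l = bE m (k : ℤ) (l : ℤ) := by
    intro k l; rw [hB]; rfl
  have hME : ∀ k l : {i : ℤ // i ≤ m}, M k l = mE m (k : ℤ) (l : ℤ) := by
    intro k l; rw [hM]; rfl
  intro i j
  have hij : (if i = j then (1 : ℚ) else 0) = (if (i : ℤ) = (j : ℤ) then 1 else 0) := by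
    simp [Subtype.ext_iff]
  constructor
  · rw [finsum_three m (i : ℤ) i.2 (fun k => B i k * M k j) (by
      intro k h1 h2 h3
      show B i k * M k j = 0
      rw [hBE]
      unfold bE
      rw [if_neg (by omega), if_neg (by omega), if_neg (by omega), zero_mul])]
    simp only [hBE, hME, hij]
    by_cases h' : (i : ℤ) + 1 ≤ m
    · rw [dif_pos h']
      have := key1 m i j hm i.2 j.2
      rw [if_pos h'] at this
      exact this
    · rw [dif_neg h']
      have := key1 m i j hm i.2 j.2
      rw [if_neg h'] at this
      exact this
  · rw [finsum_three m (j : ℤ) j.2 (fun k => M i k * B k j) (by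
      intro k h1 h2 h3
      show M i k * B k j = 0
      rw [hBE]
      unfold bE
      rw [if_neg (by omega), if_neg (by omega), if_neg (by omega), mul_zero])]
    simp only [hBE, hME, hij]
    by_cases h' : (j : ℤ) + 1 ≤ m
    · rw [dif_pos h']
      have := key2 m i j hm i.2 j.2
      rw [if_pos h'] at this
      exact this
    · rw [dif_neg h']
      have := key2 m i j hm i.2 j.2
      rw [if_neg h'] at this
      exact this
end

section
/- Fix an integer m ≥ 3. Let D be the array over ℚ indexed by the integers i, j ≤ m with D_{ii} = −2 for i ≤ −1, D_{i,i+1} = D_{i+1,i} = 1 for i ≤ −2, D_{−1,0} = D_{0,−1} = 1, D_{00} = 0, D_{0,1} = D_{1,0} = −1, D_{ii} = 2 for 1 ≤ i ≤ m, D_{i,i+1} = D_{i+1,i} = −1 for 1 ≤ i ≤ m−2, D_{m−2,m} = D_{m,m−2} = −1, and all other entries 0 (in particular D_{m−1,m} = D_{m,m−1} = 0); let M be the symmetric array with (for i ≤ j ≤ m): M_{ij} = −i if i ≤ 0 and i ≤ j ≤ m−2; M_{ij} = −i/2 if i ≤ 0 and j ∈ {m−1, m}; M_{ij} = i if 0 <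 i ≤ j ≤ m−2; M_{ij} = i/2 if 0 < i < m−1 and j ∈ {m−1, m}; M_{m−1,m} = (m−2)/4; and M_{m−1,m−1} = M_{mm} = m/4. Then M is a two-sided inverse of D: for all i, j ≤ m, the sums Σ_k D_{ik} M_{kj} and Σ_k M_{ik} D_{kj} (each having only finitely many nonzero terms) both equal 1 if i = j and 0 if i ≠ j. -/
set_option maxHeartbeats 1000000

/-- Lower-triangular part of the inverse matrix, as a function on `ℤ`. -/
def mzlow (m i j : ℤ) : ℚ :=
  if j ≤ m - 2 then (if i ≤ 0 then -(i : ℚ) else (i : ℚ))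
  else if i ≤ 0 then -((i : ℚ) / 2)
  else if i < m - 1 then (i : ℚ) / 2
  else if i = j then (m : ℚ) / 4
  else ((m : ℚ) - 2) / 4

/-- The inverse matrix as a symmetric function on `ℤ`. -/
def mzf (m i j : ℤ) : ℚ := if i ≤ j then mzlow m i j else mzlow m j i

/-- The Cartan matrix as a function on `ℤ`. -/
def dzf (m i j : ℤ) : ℚ :=
  if i = j then (if i ≤ -1 then -2 else if i = 0 then 0 else 2)
  else if i + 1 = j ∨ j + 1 = i then
    (if min i j ≤ -1 then 1 else if min i j = m - 1 then 0 else -1)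
  else if (i = m - 2 ∧ j = m) ∨ (j = m - 2 ∧ i = m) then -1
  else 0

lemma dzsymm (m i j : ℤ) : dzf m i j = dzf m j i := by
  unfold dzf
  split_ifs <;> first | rfl | (exfalso; omega)

lemma mzsymm (m i j : ℤ) : mzf m i j = mzf m j i := by
  unfold mzf
  rcases lt_trichotomy i j with h | h | h
  · rw [if_pos h.le, if_neg (by omega)]
  · subst h; rfl
  · rw [if_neg (by omega), if_pos h.le]

lemma mzA (m a j : ℤ) (ha : a ≤ 0) (haj : a ≤ j) (hj : j ≤ m - 2) : mzf m a j = -(a : ℚ) := by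
  unfold mzf mzlow; rw [if_pos haj, if_pos hj, if_pos ha]

lemma mzB (m a j : ℤ) (ha : a ≤ 0) (haj : a ≤ j) (hj : m - 2 < j) :
    mzf m a j = -((a : ℚ) / 2) := by
  unfold mzf mzlow; rw [if_pos haj, if_neg (by omega), if_pos ha]

lemma mzC (m a j : ℤ) (ha : 0 ≤ a) (haj : a ≤ j) (hj : j ≤ m - 2) : mzf m a j = (a : ℚ) := by
  unfold mzf mzlow
  rcases eq_or_lt_of_le ha with h | h
  · rw [if_pos haj, if_pos hj, if_pos (by omega), ← h]
    norm_num
  · rw [if_pos haj, if_pos hj, if_neg (by omega)]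

lemma mzD (m a j : ℤ) (ha : 0 ≤ a) (ham : a < m - 1) (haj : a ≤ j) (hj : m - 2 < j) :
    mzf m a j = (a : ℚ) / 2 := by
  unfold mzf mzlow
  rcases eq_or_lt_of_le ha with h | h
  · rw [if_pos haj, if_neg (by omega), if_pos (by omega), ← h]
    norm_num
  · rw [if_pos haj, if_neg (by omega), if_neg (by omega), if_pos ham]

lemma mzE (m : ℤ) (hm : 3 ≤ m) : mzf m (m - 1) (m - 1) = (m : ℚ) / 4 := by
  unfold mzf mzlow
  rw [if_pos le_rfl, if_neg (by omega), if_neg (by omega), if_neg (by omega), if_pos rfl]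

lemma mzF (m : ℤ) (hm : 3 ≤ m) : mzf m m m = (m : ℚ) / 4 := by
  unfold mzf mzlow
  rw [if_pos le_rfl, if_neg (by omega), if_neg (by omega), if_neg (by omega), if_pos rfl]

lemma mzG (m : ℤ) (hm : 3 ≤ m) : mzf m (m - 1) m = ((m : ℚ) - 2) / 4 := by
  unfold mzf mzlow
  rw [if_pos (by omega), if_neg (by omega), if_neg (by omega), if_neg (by omega),
    if_neg (by omega)]

lemma finsum_eq_three {α : Type*} [DecidableEq α] (f : α → ℚ) (a b c : α) (hab : a ≠ b)
    (hac : a ≠ c) (hbc : b ≠ c) (h : ∀ k, k ≠ a → k ≠ b → k ≠ c → f k = 0) :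
    ∑ᶠ k, f k = f a + f b + f c := by
  have hs : Function.support f ⊆ (({a, b, c} : Finset α) : Set α) := by
    intro k hk
    simp only [Finset.coe_insert, Finset.coe_singleton, Set.mem_insert_iff,
      Set.mem_singleton_iff]
    by_contra hk'
    push_neg at hk'
    exact hk (h k hk'.1 hk'.2.1 hk'.2.2)
  rw [finsum_eq_sum_of_support_subset f hs,
    Finset.sum_insert (by simp [hab, hac]), Finset.sum_insert (by simp [hbc]),
    Finset.sum_singleton, ← add_assoc]

lemma finsum_eq_four {α : Type*} [DecidableEq α] (f : α → ℚ) (a b c d : α) (hab : a ≠ b)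
    (hac : a ≠ c) (had : a ≠ d) (hbc : b ≠ c) (hbd : b ≠ d) (hcd : c ≠ d)
    (h : ∀ k, k ≠ a → k ≠ b → k ≠ c → k ≠ d → f k = 0) :
    ∑ᶠ k, f k = f a + f b + f c + f d := by
  have hs : Function.support f ⊆ (({a, b, c, d} : Finset α) : Set α) := by
    intro k hk
    simp only [Finset.coe_insert, Finset.coe_singleton, Set.mem_insert_iff,
      Set.mem_singleton_iff]
    by_contra hk'
    push_neg at hk'
    exact hk (h k hk'.1 hk'.2.1 hk'.2.2.1 hk'.2.2.2)
  rw [finsum_eq_sum_of_support_subset f hs,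
    Finset.sum_insert (by simp [hab, hac, had]), Finset.sum_insert (by simp [hbc, hbd]),
    Finset.sum_insert (by simp [hcd]), Finset.sum_singleton, ← add_assoc, ← add_assoc]

lemma key_main (m : ℤ) (hm : 3 ≤ m) (D M : {i : ℤ // i ≤ m} → {i : ℤ // i ≤ m} → ℚ)
    (Dval : ∀ i j : {i : ℤ // i ≤ m}, D i j = dzf m i j)
    (Mval : ∀ i j : {i : ℤ // i ≤ m}, M i j = mzf m i j) :
    ∀ i j : {i : ℤ // i ≤ m},
      (∑ᶠ k : {i : ℤ // i ≤ m}, D i k * M k j) = (if i = j then 1 else 0) := by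
  intro i j
  have him := i.2
  have hjm := j.2
  have hij : (if i = j then (1:ℚ) else 0) = (if (i:ℤ) = (j:ℤ) then 1 else 0) := by
    rcases eq_or_ne i j with h | h
    · subst h; simp
    · rw [if_neg h, if_neg (fun hc => h (Subtype.ext hc))]
  rcases (show (i:ℤ) ≤ -1 ∨ (i:ℤ) = 0 ∨ (1 ≤ (i:ℤ) ∧ (i:ℤ) ≤ m-3) ∨ (i:ℤ) = m-2 ∨
      (i:ℤ) = m-1 ∨ (i:ℤ) = m from by omega) with hi | hi | hi | hi | hi | hi
  -- Region A1 : i ≤ -1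
  · rw [finsum_eq_three (fun k => D i k * M k j) ⟨(i:ℤ)-1, by omega⟩ ⟨(i:ℤ), by omega⟩
        ⟨(i:ℤ)+1, by omega⟩
        (by simp only [ne_eq, Subtype.mk.injEq]; omega)
        (by simp only [ne_eq, Subtype.mk.injEq]; omega)
        (by simp only [ne_eq, Subtype.mk.injEq]; omega)
        (by
          intro k hka hkb hkc
          have h1 : (k:ℤ) ≠ (i:ℤ)-1 := fun h => hka (Subtype.ext h)
          have h2 : (k:ℤ) ≠ (i:ℤ) := fun h => hkb (Subtype.ext h)
          have h3 : (k:ℤ) ≠ (i:ℤ)+1 := fun h => hkc (Subtype.ext h)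
          have hkm := k.2
          show D i k * M k j = 0
          rw [Dval]; unfold dzf
          rw [if_neg (by omega), if_neg (by omega), if_neg (by omega), zero_mul]),
      hij]
    simp only [Dval, Mval]
    show dzf m (i:ℤ) ((i:ℤ)-1) * mzf m ((i:ℤ)-1) (j:ℤ) + dzf m (i:ℤ) (i:ℤ) * mzf m (i:ℤ) (j:ℤ)
        + dzf m (i:ℤ) ((i:ℤ)+1) * mzf m ((i:ℤ)+1) (j:ℤ) = if (i:ℤ) = (j:ℤ) then 1 else 0
    rw [show dzf m (i:ℤ) ((i:ℤ)-1) = 1 by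
          unfold dzf; rw [if_neg (by omega), if_pos (by omega), if_pos (by omega)],
        show dzf m (i:ℤ) (i:ℤ) = -2 by unfold dzf; rw [if_pos rfl, if_pos (by omega)],
        show dzf m (i:ℤ) ((i:ℤ)+1) = 1 by
          unfold dzf; rw [if_neg (by omega), if_pos (by omega), if_pos (by omega)]]
    rcases (show (j:ℤ) ≤ (i:ℤ)-2 ∨ (j:ℤ) = (i:ℤ)-1 ∨ (j:ℤ) = (i:ℤ) ∨ (j:ℤ) = (i:ℤ)+1 ∨
        ((i:ℤ)+1 < (j:ℤ) ∧ (j:ℤ) ≤ m-2) ∨ m-2 < (j:ℤ) from by omega) with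
      hj | hj | hj | hj | hj | hj
    · rw [mzsymm m ((i:ℤ)-1) (j:ℤ), mzsymm m (i:ℤ) (j:ℤ), mzsymm m ((i:ℤ)+1) (j:ℤ),
        mzA m (j:ℤ) ((i:ℤ)-1) (by omega) (by omega) (by omega),
        mzA m (j:ℤ) (i:ℤ) (by omega) (by omega) (by omega),
        mzA m (j:ℤ) ((i:ℤ)+1) (by omega) (by omega) (by omega), if_neg (by omega)]
      ring
    · rw [mzA m ((i:ℤ)-1) (j:ℤ) (by omega) (by omega) (by omega),
        mzsymm m (i:ℤ) (j:ℤ), mzA m (j:ℤ) (i:ℤ) (by omega) (by omega) (by omega),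
        mzsymm m ((i:ℤ)+1) (j:ℤ), mzA m (j:ℤ) ((i:ℤ)+1) (by omega) (by omega) (by omega),
        if_neg (by omega), hj]
      push_cast; ring
    · rw [mzA m ((i:ℤ)-1) (j:ℤ) (by omega) (by omega) (by omega),
        mzA m (i:ℤ) (j:ℤ) (by omega) (by omega) (by omega),
        mzsymm m ((i:ℤ)+1) (j:ℤ), mzA m (j:ℤ) ((i:ℤ)+1) (by omega) (by omega) (by omega),
        if_pos (by omega), hj]
      push_cast; ring
    · rw [mzA m ((i:ℤ)-1) (j:ℤ) (by omega) (by omega) (by omega),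
        mzA m (i:ℤ) (j:ℤ) (by omega) (by omega) (by omega),
        mzA m ((i:ℤ)+1) (j:ℤ) (by omega) (by omega) (by omega), if_neg (by omega)]
      push_cast; ring
    · rw [mzA m ((i:ℤ)-1) (j:ℤ) (by omega) (by omega) (by omega),
        mzA m (i:ℤ) (j:ℤ) (by omega) (by omega) (by omega),
        mzA m ((i:ℤ)+1) (j:ℤ) (by omega) (by omega) (by omega), if_neg (by omega)]
      push_cast; ring
    · rw [mzB m ((i:ℤ)-1) (j:ℤ) (by omega) (by omega) (by omega),
        mzB m (i:ℤ) (j:ℤ) (by omega) (by omega) (by omega),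
        mzB m ((i:ℤ)+1) (j:ℤ) (by omega) (by omega) (by omega), if_neg (by omega)]
      push_cast; ring
  -- Region A2 : i = 0
  · rw [finsum_eq_three (fun k => D i k * M k j) ⟨(i:ℤ)-1, by omega⟩ ⟨(i:ℤ), by omega⟩
        ⟨(i:ℤ)+1, by omega⟩
        (by simp only [ne_eq, Subtype.mk.injEq]; omega)
        (by simp only [ne_eq, Subtype.mk.injEq]; omega)
        (by simp only [ne_eq, Subtype.mk.injEq]; omega)
        (by
          intro k hka hkb hkc
          have h1 : (k:ℤ) ≠ (i:ℤ)-1 := fun h => hka (Subtype.ext h)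
          have h2 : (k:ℤ) ≠ (i:ℤ) := fun h => hkb (Subtype.ext h)
          have h3 : (k:ℤ) ≠ (i:ℤ)+1 := fun h => hkc (Subtype.ext h)
          have hkm := k.2
          show D i k * M k j = 0
          rw [Dval]; unfold dzf
          rw [if_neg (by omega), if_neg (by omega), if_neg (by omega), zero_mul]),
      hij]
    simp only [Dval, Mval]
    show dzf m (i:ℤ) ((i:ℤ)-1) * mzf m ((i:ℤ)-1) (j:ℤ) + dzf m (i:ℤ) (i:ℤ) * mzf m (i:ℤ) (j:ℤ)
        + dzf m (i:ℤ) ((i:ℤ)+1) * mzf m ((i:ℤ)+1) (j:ℤ) = if (i:ℤ) = (j:ℤ) then 1 else 0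
    rw [show dzf m (i:ℤ) ((i:ℤ)-1) = 1 by
          unfold dzf; rw [if_neg (by omega), if_pos (by omega), if_pos (by omega)],
        show dzf m (i:ℤ) (i:ℤ) = 0 by
          unfold dzf; rw [if_pos rfl, if_neg (by omega), if_pos (by omega)],
        show dzf m (i:ℤ) ((i:ℤ)+1) = -1 by
          unfold dzf;
          rw [if_neg (by omega), if_pos (by omega), if_neg (by omega), if_neg (by omega)]]
    rcases (show (j:ℤ) ≤ (i:ℤ)-2 ∨ (j:ℤ) = (i:ℤ)-1 ∨ (j:ℤ) = (i:ℤ) ∨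
        ((i:ℤ)+1 ≤ (j:ℤ) ∧ (j:ℤ) ≤ m-2) ∨ m-2 < (j:ℤ) from by omega) with
      hj | hj | hj | hj | hj
    · rw [mzsymm m ((i:ℤ)-1) (j:ℤ), mzA m (j:ℤ) ((i:ℤ)-1) (by omega) (by omega) (by omega),
        mzsymm m ((i:ℤ)+1) (j:ℤ), mzA m (j:ℤ) ((i:ℤ)+1) (by omega) (by omega) (by omega),
        if_neg (by omega)]
      ring
    · rw [mzA m ((i:ℤ)-1) (j:ℤ) (by omega) (by omega) (by omega),
        mzsymm m ((i:ℤ)+1) (j:ℤ), mzA m (j:ℤ) ((i:ℤ)+1) (by omega) (by omega) (by omega),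
        if_neg (by omega), hj]
      push_cast; ring
    · rw [mzA m ((i:ℤ)-1) (j:ℤ) (by omega) (by omega) (by omega),
        mzsymm m ((i:ℤ)+1) (j:ℤ), mzA m (j:ℤ) ((i:ℤ)+1) (by omega) (by omega) (by omega),
        if_pos (by omega), hj, hi]
      push_cast; ring
    · rw [mzA m ((i:ℤ)-1) (j:ℤ) (by omega) (by omega) (by omega),
        mzC m ((i:ℤ)+1) (j:ℤ) (by omega) (by omega) (by omega), if_neg (by omega), hi]
      push_cast; ring
    · rw [mzB m ((i:ℤ)-1) (j:ℤ) (by omega) (by omega) (by omega),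
        mzD m ((i:ℤ)+1) (j:ℤ) (by omega) (by omega) (by omega) (by omega),
        if_neg (by omega), hi]
      push_cast; ring
  -- Region A3 : 1 ≤ i ≤ m-3
  · rw [finsum_eq_three (fun k => D i k * M k j) ⟨(i:ℤ)-1, by omega⟩ ⟨(i:ℤ), by omega⟩
        ⟨(i:ℤ)+1, by omega⟩
        (by simp only [ne_eq, Subtype.mk.injEq]; omega)
        (by simp only [ne_eq, Subtype.mk.injEq]; omega)
        (by simp only [ne_eq, Subtype.mk.injEq]; omega)
        (by
          intro k hka hkb hkc
          have h1 : (k:ℤ) ≠ (i:ℤ)-1 := fun h => hka (Subtype.ext h)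
          have h2 : (k:ℤ) ≠ (i:ℤ) := fun h => hkb (Subtype.ext h)
          have h3 : (k:ℤ) ≠ (i:ℤ)+1 := fun h => hkc (Subtype.ext h)
          have hkm := k.2
          show D i k * M k j = 0
          rw [Dval]; unfold dzf
          rw [if_neg (by omega), if_neg (by omega), if_neg (by omega), zero_mul]),
      hij]
    simp only [Dval, Mval]
    show dzf m (i:ℤ) ((i:ℤ)-1) * mzf m ((i:ℤ)-1) (j:ℤ) + dzf m (i:ℤ) (i:ℤ) * mzf m (i:ℤ) (j:ℤ)
        + dzf m (i:ℤ) ((i:ℤ)+1) * mzf m ((i:ℤ)+1) (j:ℤ) = if (i:ℤ) = (j:ℤ) then 1 else 0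
    rw [show dzf m (i:ℤ) ((i:ℤ)-1) = -1 by
          unfold dzf
          rw [if_neg (by omega), if_pos (by omega), if_neg (by omega), if_neg (by omega)],
        show dzf m (i:ℤ) (i:ℤ) = 2 by
          unfold dzf; rw [if_pos rfl, if_neg (by omega), if_neg (by omega)],
        show dzf m (i:ℤ) ((i:ℤ)+1) = -1 by
          unfold dzf
          rw [if_neg (by omega), if_pos (by omega), if_neg (by omega), if_neg (by omega)]]
    rcases (show ((j:ℤ) ≤ 0 ∧ (j:ℤ) ≤ (i:ℤ)-1) ∨ (0 < (j:ℤ) ∧ (j:ℤ) ≤ (i:ℤ)-1) ∨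
        (j:ℤ) = (i:ℤ) ∨ ((i:ℤ)+1 ≤ (j:ℤ) ∧ (j:ℤ) ≤ m-2) ∨ m-2 < (j:ℤ) from by omega) with
      hj | hj | hj | hj | hj
    · rw [mzsymm m ((i:ℤ)-1) (j:ℤ), mzsymm m (i:ℤ) (j:ℤ), mzsymm m ((i:ℤ)+1) (j:ℤ),
        mzA m (j:ℤ) ((i:ℤ)-1) (by omega) (by omega) (by omega),
        mzA m (j:ℤ) (i:ℤ) (by omega) (by omega) (by omega),
        mzA m (j:ℤ) ((i:ℤ)+1) (by omega) (by omega) (by omega), if_neg (by omega)]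
      ring
    · rw [mzsymm m ((i:ℤ)-1) (j:ℤ), mzsymm m (i:ℤ) (j:ℤ), mzsymm m ((i:ℤ)+1) (j:ℤ),
        mzC m (j:ℤ) ((i:ℤ)-1) (by omega) (by omega) (by omega),
        mzC m (j:ℤ) (i:ℤ) (by omega) (by omega) (by omega),
        mzC m (j:ℤ) ((i:ℤ)+1) (by omega) (by omega) (by omega), if_neg (by omega)]
      ring
    · rw [mzC m ((i:ℤ)-1) (j:ℤ) (by omega) (by omega) (by omega),
        mzC m (i:ℤ) (j:ℤ) (by omega) (by omega) (by omega),
        mzsymm m ((i:ℤ)+1) (j:ℤ), mzC m (j:ℤ) ((i:ℤ)+1) (by omega) (by omega) (by omega),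
        if_pos (by omega), hj]
      push_cast; ring
    · rw [mzC m ((i:ℤ)-1) (j:ℤ) (by omega) (by omega) (by omega),
        mzC m (i:ℤ) (j:ℤ) (by omega) (by omega) (by omega),
        mzC m ((i:ℤ)+1) (j:ℤ) (by omega) (by omega) (by omega), if_neg (by omega)]
      push_cast; ring
    · rw [mzD m ((i:ℤ)-1) (j:ℤ) (by omega) (by omega) (by omega) (by omega),
        mzD m (i:ℤ) (j:ℤ) (by omega) (by omega) (by omega) (by omega),
        mzD m ((i:ℤ)+1) (j:ℤ) (by omega) (by omega) (by omega) (by omega),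
        if_neg (by omega)]
      push_cast; ring
  -- Region B : i = m-2
  · rw [finsum_eq_four (fun k => D i k * M k j) ⟨m-3, by omega⟩ ⟨m-2, by omega⟩
        ⟨m-1, by omega⟩ ⟨m, by omega⟩
        (by simp only [ne_eq, Subtype.mk.injEq]; omega)
        (by simp only [ne_eq, Subtype.mk.injEq]; omega)
        (by simp only [ne_eq, Subtype.mk.injEq]; omega)
        (by simp only [ne_eq, Subtype.mk.injEq]; omega)
        (by simp only [ne_eq, Subtype.mk.injEq]; omega)
        (by simp only [ne_eq, Subtype.mk.injEq]; omega)
        (by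
          intro k hka hkb hkc hkd
          have h1 : (k:ℤ) ≠ m-3 := fun h => hka (Subtype.ext h)
          have h2 : (k:ℤ) ≠ m-2 := fun h => hkb (Subtype.ext h)
          have h3 : (k:ℤ) ≠ m-1 := fun h => hkc (Subtype.ext h)
          have h4 : (k:ℤ) ≠ m := fun h => hkd (Subtype.ext h)
          have hkm := k.2
          show D i k * M k j = 0
          rw [Dval]; unfold dzf
          rw [if_neg (by omega), if_neg (by omega), if_neg (by omega), zero_mul]),
      hij]
    simp only [Dval, Mval]
    show dzf m (i:ℤ) (m-3) * mzf m (m-3) (j:ℤ) + dzf m (i:ℤ) (m-2) * mzf m (m-2) (j:ℤ)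
        + dzf m (i:ℤ) (m-1) * mzf m (m-1) (j:ℤ) + dzf m (i:ℤ) m * mzf m m (j:ℤ)
        = if (i:ℤ) = (j:ℤ) then 1 else 0
    rw [show dzf m (i:ℤ) (m-3) = -1 by
          unfold dzf
          rw [if_neg (by omega), if_pos (by omega), if_neg (by omega), if_neg (by omega)],
        show dzf m (i:ℤ) (m-2) = 2 by
          unfold dzf; rw [if_pos (by omega), if_neg (by omega), if_neg (by omega)],
        show dzf m (i:ℤ) (m-1) = -1 by
          unfold dzf
          rw [if_neg (by omega), if_pos (by omega), if_neg (by omega), if_neg (by omega)],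
        show dzf m (i:ℤ) m = -1 by
          unfold dzf; rw [if_neg (by omega), if_neg (by omega), if_pos (by omega)]]
    rcases (show (j:ℤ) ≤ 0 ∨ (0 < (j:ℤ) ∧ (j:ℤ) ≤ m-3) ∨ (j:ℤ) = m-2 ∨ (j:ℤ) = m-1 ∨
        (j:ℤ) = m from by omega) with hj | hj | hj | hj | hj
    · rw [mzsymm m (m-3) (j:ℤ), mzsymm m (m-2) (j:ℤ), mzsymm m (m-1) (j:ℤ),
        mzsymm m m (j:ℤ),
        mzA m (j:ℤ) (m-3) (by omega) (by omega) (by omega),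
        mzA m (j:ℤ) (m-2) (by omega) (by omega) (by omega),
        mzB m (j:ℤ) (m-1) (by omega) (by omega) (by omega),
        mzB m (j:ℤ) m (by omega) (by omega) (by omega), if_neg (by omega)]
      ring
    · rw [mzsymm m (m-3) (j:ℤ), mzsymm m (m-2) (j:ℤ), mzsymm m (m-1) (j:ℤ),
        mzsymm m m (j:ℤ),
        mzC m (j:ℤ) (m-3) (by omega) (by omega) (by omega),
        mzC m (j:ℤ) (m-2) (by omega) (by omega) (by omega),
        mzD m (j:ℤ) (m-1) (by omega) (by omega) (by omega) (by omega),
        mzD m (j:ℤ) m (by omega) (by omega) (by omega) (by omega), if_neg (by omega)]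
      ring
    · rw [hj, mzC m (m-3) (m-2) (by omega) (by omega) (by omega),
        mzC m (m-2) (m-2) (by omega) (by omega) (by omega),
        mzsymm m (m-1) (m-2), mzD m (m-2) (m-1) (by omega) (by omega) (by omega) (by omega),
        mzsymm m m (m-2), mzD m (m-2) m (by omega) (by omega) (by omega) (by omega),
        if_pos (by omega)]
      push_cast; ring
    · rw [hj, mzD m (m-3) (m-1) (by omega) (by omega) (by omega) (by omega),
        mzD m (m-2) (m-1) (by omega) (by omega) (by omega) (by omega),
        mzE m hm, mzsymm m m (m-1), mzG m hm, if_neg (by omega)]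
      push_cast; ring
    · rw [hj, mzD m (m-3) m (by omega) (by omega) (by omega) (by omega),
        mzD m (m-2) m (by omega) (by omega) (by omega) (by omega),
        mzG m hm, mzF m hm, if_neg (by omega)]
      push_cast; ring
  -- Region C : i = m-1
  · rw [finsum_eq_three (fun k => D i k * M k j) ⟨m-2, by omega⟩ ⟨m-1, by omega⟩
        ⟨m, by omega⟩
        (by simp only [ne_eq, Subtype.mk.injEq]; omega)
        (by simp only [ne_eq, Subtype.mk.injEq]; omega)
        (by simp only [ne_eq, Subtype.mk.injEq]; omega)
        (by
          intro k hka hkb hkc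
          have h1 : (k:ℤ) ≠ m-2 := fun h => hka (Subtype.ext h)
          have h2 : (k:ℤ) ≠ m-1 := fun h => hkb (Subtype.ext h)
          have h3 : (k:ℤ) ≠ m := fun h => hkc (Subtype.ext h)
          have hkm := k.2
          show D i k * M k j = 0
          rw [Dval]; unfold dzf
          rw [if_neg (by omega), if_neg (by omega), if_neg (by omega), zero_mul]),
      hij]
    simp only [Dval, Mval]
    show dzf m (i:ℤ) (m-2) * mzf m (m-2) (j:ℤ) + dzf m (i:ℤ) (m-1) * mzf m (m-1) (j:ℤ)
        + dzf m (i:ℤ) m * mzf m m (j:ℤ) = if (i:ℤ) = (j:ℤ) then 1 else 0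
    rw [show dzf m (i:ℤ) (m-2) = -1 by
          unfold dzf
          rw [if_neg (by omega), if_pos (by omega), if_neg (by omega), if_neg (by omega)],
        show dzf m (i:ℤ) (m-1) = 2 by
          unfold dzf; rw [if_pos (by omega), if_neg (by omega), if_neg (by omega)],
        show dzf m (i:ℤ) m = 0 by
          unfold dzf
          rw [if_neg (by omega), if_pos (by omega), if_neg (by omega), if_pos (by omega)]]
    rcases (show (j:ℤ) ≤ 0 ∨ (0 < (j:ℤ) ∧ (j:ℤ) ≤ m-2) ∨ (j:ℤ) = m-1 ∨ (j:ℤ) = m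
        from by omega) with hj | hj | hj | hj
    · rw [mzsymm m (m-2) (j:ℤ), mzsymm m (m-1) (j:ℤ),
        mzA m (j:ℤ) (m-2) (by omega) (by omega) (by omega),
        mzB m (j:ℤ) (m-1) (by omega) (by omega) (by omega), if_neg (by omega)]
      ring
    · rw [mzsymm m (m-2) (j:ℤ), mzsymm m (m-1) (j:ℤ),
        mzC m (j:ℤ) (m-2) (by omega) (by omega) (by omega),
        mzD m (j:ℤ) (m-1) (by omega) (by omega) (by omega) (by omega), if_neg (by omega)]
      ring
    · rw [hj, mzD m (m-2) (m-1) (by omega) (by omega) (by omega) (by omega),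
        mzE m hm, if_pos (by omega)]
      push_cast; ring
    · rw [hj, mzD m (m-2) m (by omega) (by omega) (by omega) (by omega),
        mzG m hm, if_neg (by omega)]
      push_cast; ring
  -- Region D : i = m
  · rw [finsum_eq_three (fun k => D i k * M k j) ⟨m-2, by omega⟩ ⟨m-1, by omega⟩
        ⟨m, by omega⟩
        (by simp only [ne_eq, Subtype.mk.injEq]; omega)
        (by simp only [ne_eq, Subtype.mk.injEq]; omega)
        (by simp only [ne_eq, Subtype.mk.injEq]; omega)
        (by
          intro k hka hkb hkc
          have h1 : (k:ℤ) ≠ m-2 := fun h => hka (Subtype.ext h)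
          have h2 : (k:ℤ) ≠ m-1 := fun h => hkb (Subtype.ext h)
          have h3 : (k:ℤ) ≠ m := fun h => hkc (Subtype.ext h)
          have hkm := k.2
          show D i k * M k j = 0
          rw [Dval]; unfold dzf
          rw [if_neg (by omega), if_neg (by omega), if_neg (by omega), zero_mul]),
      hij]
    simp only [Dval, Mval]
    show dzf m (i:ℤ) (m-2) * mzf m (m-2) (j:ℤ) + dzf m (i:ℤ) (m-1) * mzf m (m-1) (j:ℤ)
        + dzf m (i:ℤ) m * mzf m m (j:ℤ) = if (i:ℤ) = (j:ℤ) then 1 else 0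
    rw [show dzf m (i:ℤ) (m-2) = -1 by
          unfold dzf; rw [if_neg (by omega), if_neg (by omega), if_pos (by omega)],
        show dzf m (i:ℤ) (m-1) = 0 by
          unfold dzf
          rw [if_neg (by omega), if_pos (by omega), if_neg (by omega), if_pos (by omega)],
        show dzf m (i:ℤ) m = 2 by
          unfold dzf; rw [if_pos (by omega), if_neg (by omega), if_neg (by omega)]]
    rcases (show (j:ℤ) ≤ 0 ∨ (0 < (j:ℤ) ∧ (j:ℤ) ≤ m-2) ∨ (j:ℤ) = m-1 ∨ (j:ℤ) = m
        from by omega) with hj | hj | hj | hj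
    · rw [mzsymm m (m-2) (j:ℤ), mzsymm m m (j:ℤ),
        mzA m (j:ℤ) (m-2) (by omega) (by omega) (by omega),
        mzB m (j:ℤ) m (by omega) (by omega) (by omega), if_neg (by omega)]
      ring
    · rw [mzsymm m (m-2) (j:ℤ), mzsymm m m (j:ℤ),
        mzC m (j:ℤ) (m-2) (by omega) (by omega) (by omega),
        mzD m (j:ℤ) m (by omega) (by omega) (by omega) (by omega), if_neg (by omega)]
      ring
    · rw [hj, mzD m (m-2) (m-1) (by omega) (by omega) (by omega) (by omega),
        mzsymm m m (m-1), mzG m hm, if_neg (by omega)]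
      push_cast; ring
    · rw [hj, mzD m (m-2) m (by omega) (by omega) (by omega) (by omega),
        mzF m hm, if_pos (by omega)]
      push_cast; ring

/-- Fix an integer `m ≥ 3`.  The distinguished Cartan matrix `D_{m,∞}` of the
infinite-rank Lie superalgebra `D(m,∞)`, indexed by the integers `≤ m`, with
`D_{ii} = -2` for `i ≤ -1`, `D_{i,i+1} = D_{i+1,i} = 1` for `i ≤ -2`,
`D_{-1,0} = D_{0,-1} = 1`, `D_{00} = 0`, `D_{0,1} = D_{1,0} = -1`, `D_{ii} = 2` for
`1 ≤ i ≤ m`, `D_{i,i+1} = D_{i+1,i} = -1` for `1 ≤ i ≤ m-2`,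
`D_{m-2,m} = D_{m,m-2} = -1`, and `0` elsewhere (in particular
`D_{m-1,m} = D_{m,m-1} = 0`), has as a two-sided inverse the symmetric array `M` with
(for `i ≤ j ≤ m`): `M_{ij} = -i` if `i ≤ 0` and `i ≤ j ≤ m-2`; `M_{ij} = -i/2` if
`i ≤ 0` and `j ∈ {m-1, m}`; `M_{ij} = i` if `0 < i ≤ j ≤ m-2`; `M_{ij} = i/2` if
`0 < i < m-1` and `j ∈ {m-1, m}`; `M_{m-1,m} = (m-2)/4`; `M_{m-1,m-1} = M_{mm} = m/4`:
for all `i, j ≤ m`, the (finitely supported) sums `Σ_k D_{ik} M_{kj}` and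
`Σ_k M_{ik} D_{kj}` both equal `1` if `i = j` and `0` otherwise. -/
theorem stmt_19 (m : ℤ) (hm : 3 ≤ m) (D M : {i : ℤ // i ≤ m} → {i : ℤ // i ≤ m} → ℚ)
    (hD : ∀ i j : {i : ℤ // i ≤ m}, D i j =
      if (i : ℤ) = (j : ℤ) then
        (if (i : ℤ) ≤ -1 then -2 else if (i : ℤ) = 0 then 0 else 2)
      else if (i : ℤ) + 1 = (j : ℤ) ∨ (j : ℤ) + 1 = (i : ℤ) then
        (if min (i : ℤ) (j : ℤ) ≤ -1 then 1
         else if min (i : ℤ) (j : ℤ) = m - 1 then 0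
         else -1)
      else if ((i : ℤ) = m - 2 ∧ (j : ℤ) = m) ∨ ((j : ℤ) = m - 2 ∧ (i : ℤ) = m) then -1
      else 0)
    (hMsymm : ∀ i j : {i : ℤ // i ≤ m}, M j i = M i j)
    (hM : ∀ i j : {i : ℤ // i ≤ m}, (i : ℤ) ≤ (j : ℤ) → M i j =
      if (j : ℤ) ≤ m - 2 then
        (if (i : ℤ) ≤ 0 then -((i : ℤ) : ℚ) else ((i : ℤ) : ℚ))
      else if (i : ℤ) ≤ 0 then -(((i : ℤ) : ℚ) / 2)
      else if (i : ℤ) < m - 1 then ((i : ℤ) : ℚ) / 2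
      else if (i : ℤ) = (j : ℤ) then (m : ℚ) / 4
      else ((m : ℚ) - 2) / 4) :
    ∀ i j : {i : ℤ // i ≤ m},
      (∑ᶠ k : {i : ℤ // i ≤ m}, D i k * M k j) = (if i = j then 1 else 0) ∧
      (∑ᶠ k : {i : ℤ // i ≤ m}, M i k * D k j) = (if i = j then 1 else 0) := by
  have Dval : ∀ i j : {i : ℤ // i ≤ m}, D i j = dzf m i j := fun i j => by
    rw [hD]; rfl
  have Mval : ∀ i j : {i : ℤ // i ≤ m}, M i j = mzf m i j := by
    intro i j
    by_cases h : (i : ℤ) ≤ (j : ℤ)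
    · rw [hM i j h]; unfold mzf mzlow; rw [if_pos h]
    · rw [hMsymm j i, hM j i (by omega)]; unfold mzf mzlow; rw [if_neg h]
  have main := key_main m hm D M Dval Mval
  intro i j
  refine ⟨main i j, ?_⟩
  have hswap : (∑ᶠ k : {i : ℤ // i ≤ m}, M i k * D k j)
      = ∑ᶠ k : {i : ℤ // i ≤ m}, D j k * M k i := by
    refine finsum_congr fun k => ?_
    rw [hMsymm k i, Dval k j, dzsymm m (k : ℤ) (j : ℤ), ← Dval j k]
    exact mul_comm _ _
  rw [hswap, main j i]
  rcases eq_or_ne i j with h | h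
  · subst h; simp
  · rw [if_neg h, if_neg (Ne.symm h)]
end
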